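/- arXiv:1104.1242 — 6 statements merged into one kernel-verified Lean document; each statement's English description precedes it below -/
import Mathlib

section
/- Let X₁,…,X_m be i.i.d. positive random variables with continuous distribution function F possessing a density on (0,∞), and let M^{(1)} ≥ M^{(2)} be the two largest order statistics of X₁,…,X_m (m ≥ 2). Then E[M^{(2)}/M^{(1)}] = 1 − m ∫₀^∞ F^{m−1}(x₂) ( ∫_{x₂}^∞ x₁^{−1} dF(x₁) ) dx₂. -/
open MeasureTheory ProbabilityTheory Filter Set Asymptotics
open scoped ENNReal NNReal Topology

/-- The second-order condition `1 - F x = C₁ x^(-α) + C₂ x^(-β) + o(x^(-β))` as `x → ∞`. -/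
def SecondOrderCondition (F : ℝ → ℝ) (C₁ C₂ α β : ℝ) : Prop :=
  (fun x : ℝ => (1 - F x) - (C₁ * x ^ (-α) + C₂ * x ^ (-β)))
    =o[atTop] fun x : ℝ => x ^ (-β)

/-- The largest value among `v 0, …, v (m-1)`. -/
noncomputable def groupMax (m : ℕ) (v : ℕ → ℝ) : ℝ :=
  sSup {x | ∃ j < m, x = v j}

/-- The second largest value among `v 0, …, v (m-1)` (the maximum over distinct pairs of
the pairwise minimum). -/
noncomputable def groupSecondMax (m : ℕ) (v : ℕ → ℝ) : ℝ :=
  sSup {x | ∃ j < m, ∃ k < m, j ≠ k ∧ x = min (v j) (v k)}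

/-!
Since `0 < M⁽²⁾ ≤ M⁽¹⁾`, we have `1 - M⁽²⁾/M⁽¹⁾ = ∫₀^∞ 1{M⁽²⁾ ≤ x < M⁽¹⁾} / M⁽¹⁾ dx`, and by
Tonelli the expectation of the right side is `∫₀^∞ E[1{M⁽²⁾ ≤ x < M⁽¹⁾} / M⁽¹⁾] dx`. For fixed `x`
the event `M⁽²⁾ ≤ x < M⁽¹⁾` is the disjoint union over `j` of the events "`X j` is the only
sample above `x`", on which `M⁽¹⁾ = X j`; the weighted indicator of such an event is a product
of functions of the single `X k`, so by independence each of the `m` events contributes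
`F(x)^(m-1) ∫_{(x,∞)} y⁻¹ dμ(y)`.
-/

section groupMax

variable {m : ℕ} (v : ℕ → ℝ)

lemma groupMax_eq_sup' (hm : m ≠ 0) :
    groupMax m v = (Finset.range m).sup' (Finset.nonempty_range_iff.2 hm) v := by
  rw [Finset.sup'_eq_csSup_image, groupMax]
  congr 1
  ext x
  simp [eq_comm]

lemma offDiag_range_nonempty (hm : 2 ≤ m) : (Finset.range m).offDiag.Nonempty :=
  ⟨(0, 1), by simp only [Finset.mem_offDiag, Finset.mem_range]; omega⟩

lemma groupSecondMax_eq_sup' (hm : 2 ≤ m) :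
    groupSecondMax m v = (Finset.range m).offDiag.sup' (offDiag_range_nonempty hm)
      fun p => min (v p.1) (v p.2) := by
  rw [Finset.sup'_eq_csSup_image, groupSecondMax]
  congr 1
  ext x
  simp [eq_comm, and_assoc]

lemma le_groupMax {j : ℕ} (hj : j < m) : v j ≤ groupMax m v := by
  rw [groupMax_eq_sup' v (by omega)]
  exact Finset.le_sup' v (Finset.mem_range.2 hj)

lemma groupMax_le_iff (hm : m ≠ 0) {x : ℝ} : groupMax m v ≤ x ↔ ∀ j < m, v j ≤ x := by
  simp [groupMax_eq_sup' v hm]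

lemma exists_groupMax_eq (hm : m ≠ 0) : ∃ j < m, groupMax m v = v j := by
  obtain ⟨j, hj, h⟩ := Finset.exists_mem_eq_sup' (Finset.nonempty_range_iff.2 hm) v
  exact ⟨j, Finset.mem_range.1 hj, (groupMax_eq_sup' v hm).trans h⟩

lemma min_le_groupSecondMax (hm : 2 ≤ m) {j k : ℕ} (hj : j < m) (hk : k < m) (hjk : j ≠ k) :
    min (v j) (v k) ≤ groupSecondMax m v := by
  rw [groupSecondMax_eq_sup' v hm]
  exact Finset.le_sup' (fun p : ℕ × ℕ => min (v p.1) (v p.2)) (b := (j, k))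
    (Finset.mem_offDiag.2 ⟨Finset.mem_range.2 hj, Finset.mem_range.2 hk, hjk⟩)

lemma groupSecondMax_le_of_forall_ne (hm : 2 ≤ m) {x : ℝ} {j : ℕ}
    (h : ∀ k < m, k ≠ j → v k ≤ x) : groupSecondMax m v ≤ x := by
  rw [groupSecondMax_eq_sup' v hm, Finset.sup'_le_iff]
  rintro ⟨a, b⟩ hab
  obtain ⟨ha, hb, hab⟩ := Finset.mem_offDiag.1 hab
  rcases eq_or_ne a j with rfl | haj
  · exact (min_le_right _ _).trans (h b (Finset.mem_range.1 hb) (Ne.symm hab))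
  · exact (min_le_left _ _).trans (h a (Finset.mem_range.1 ha) haj)

lemma groupSecondMax_le_groupMax (hm : 2 ≤ m) : groupSecondMax m v ≤ groupMax m v :=
  groupSecondMax_le_of_forall_ne v hm (j := 0) fun _ hk _ => le_groupMax v hk

lemma groupSecondMax_pos (hm : 2 ≤ m) (hv : ∀ j < m, 0 < v j) : 0 < groupSecondMax m v :=
  (lt_min (hv 0 (by omega)) (hv 1 (by omega))).trans_le
    (min_le_groupSecondMax v hm (by omega) (by omega) zero_ne_one)

lemma groupMax_eq_of_forall_ne_le (hm : m ≠ 0) {x : ℝ} {j : ℕ} (hj : j < m) (hxj : x < v j)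
    (h : ∀ k < m, k ≠ j → v k ≤ x) : groupMax m v = v j := by
  refine le_antisymm ((groupMax_le_iff v hm).2 fun k hk => ?_) (le_groupMax v hj)
  rcases eq_or_ne k j with rfl | hkj
  · exact le_rfl
  · exact (h k hk hkj).trans hxj.le

lemma groupSecondMax_le_and_lt_groupMax_iff (hm : 2 ≤ m) (x : ℝ) :
    groupSecondMax m v ≤ x ∧ x < groupMax m v ↔ ∃ j < m, x < v j ∧ ∀ k < m, k ≠ j → v k ≤ x := by
  constructor
  · rintro ⟨h₂, h₁⟩
    obtain ⟨j, hj, hmax⟩ := exists_groupMax_eq v (m := m) (by omega)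
    refine ⟨j, hj, hmax ▸ h₁, fun k hk hkj => ?_⟩
    by_contra! hxk
    exact (min_le_groupSecondMax v hm hj hk hkj.symm).trans h₂ |>.not_gt
      (lt_min (hmax ▸ h₁) hxk)
  · rintro ⟨j, hj, hxj, h⟩
    exact ⟨groupSecondMax_le_of_forall_ne v hm h, hxj.trans_le (le_groupMax v hj)⟩

lemma indicator_Ico_groupSecondMax_groupMax (hm : 2 ≤ m) (x : ℝ) :
    (Ico (groupSecondMax m v) (groupMax m v)).indicator
        (fun _ => ENNReal.ofReal (groupMax m v)⁻¹) x
      = ∑ j ∈ Finset.range m,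
          if x < v j ∧ ∀ k < m, k ≠ j → v k ≤ x then ENNReal.ofReal (v j)⁻¹ else 0 := by
  by_cases h : ∃ j < m, x < v j ∧ ∀ k < m, k ≠ j → v k ≤ x
  · rw [indicator_of_mem
      (show x ∈ Ico _ _ from (groupSecondMax_le_and_lt_groupMax_iff v hm x).2 h)]
    obtain ⟨j, hj, hxj, hle⟩ := h
    rw [Finset.sum_eq_single_of_mem j (Finset.mem_range.2 hj), if_pos ⟨hxj, hle⟩,
      groupMax_eq_of_forall_ne_le v (by omega) hj hxj hle]
    exact fun i hi hij => if_neg fun hi' => (hle i (Finset.mem_range.1 hi) hij).not_gt hi'.1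
  · rw [indicator_of_notMem (show x ∉ Ico _ _ from
      fun hx => h ((groupSecondMax_le_and_lt_groupMax_iff v hm x).1 hx))]
    exact (Finset.sum_eq_zero fun j hj => if_neg fun hj' => h ⟨j, Finset.mem_range.1 hj, hj'⟩).symm

end groupMax

section soleExceedance

noncomputable def soleExceedanceFactor (x : ℝ) (j k : ℕ) : ℝ → ℝ≥0∞ :=
  if k = j then (Ioi x).indicator fun y => ENNReal.ofReal y⁻¹ else (Iic x).indicator 1

variable (x : ℝ) {j : ℕ}

lemma soleExceedanceFactor_self :
    soleExceedanceFactor x j j = (Ioi x).indicator fun y => ENNReal.ofReal y⁻¹ :=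
  if_pos rfl

lemma soleExceedanceFactor_of_ne {k : ℕ} (hkj : k ≠ j) :
    soleExceedanceFactor x j k = (Iic x).indicator 1 :=
  if_neg hkj

lemma measurable_soleExceedanceFactor (k : ℕ) : Measurable (soleExceedanceFactor x j k) := by
  unfold soleExceedanceFactor
  split_ifs
  · exact measurable_inv.ennreal_ofReal.indicator measurableSet_Ioi
  · exact measurable_one.indicator measurableSet_Iic

lemma prod_soleExceedanceFactor {m : ℕ} (hj : j < m) (v : ℕ → ℝ) :
    ∏ k ∈ Finset.range m, soleExceedanceFactor x j k (v k)
      = if x < v j ∧ ∀ k < m, k ≠ j → v k ≤ x then ENNReal.ofReal (v j)⁻¹ else 0 := by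
  rw [← Finset.mul_prod_erase _ _ (Finset.mem_range.2 hj), soleExceedanceFactor_self,
    Finset.prod_congr rfl fun k hk => by
    rw [soleExceedanceFactor_of_ne x (Finset.ne_of_mem_erase hk)]]
  simp only [indicator_apply, mem_Ioi, mem_Iic, Pi.one_apply, Finset.prod_boole,
    ite_zero_mul_ite_zero, mul_one, Finset.mem_erase, Finset.mem_range]
  congr! 2
  grind

lemma lintegral_soleExceedanceFactor_self (μ : Measure ℝ) :
    ∫⁻ y, soleExceedanceFactor x j j y ∂μ = ∫⁻ y in Ioi x, ENNReal.ofReal y⁻¹ ∂μ := by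
  rw [soleExceedanceFactor_self, lintegral_indicator measurableSet_Ioi]

lemma lintegral_soleExceedanceFactor_of_ne (μ : Measure ℝ) {k : ℕ} (hkj : k ≠ j) :
    ∫⁻ y, soleExceedanceFactor x j k y ∂μ = μ (Iic x) := by
  rw [soleExceedanceFactor_of_ne x hkj, lintegral_indicator_one measurableSet_Iic]

end soleExceedance

lemma ofReal_one_sub_div_eq_setLIntegral {a b : ℝ} (ha : 0 < a) (hab : a ≤ b) :
    ENNReal.ofReal (1 - a / b)
      = ∫⁻ x in Ioi 0, (Ico a b).indicator (fun _ => ENNReal.ofReal b⁻¹) x := by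
  have hb : 0 < b := ha.trans_le hab
  have hsub : Ico a b ⊆ Ioi 0 := fun y hy => ha.trans_le hy.1
  rw [lintegral_indicator measurableSet_Ico, Measure.restrict_restrict measurableSet_Ico,
    inter_eq_self_of_subset_left hsub, setLIntegral_const, Real.volume_Ico,
    ← ENNReal.ofReal_mul (inv_nonneg.2 hb.le)]
  congr 1
  field_simp

lemma integral_toReal_pow_mul_setIntegral_inv (μ : Measure ℝ) [IsFiniteMeasure μ] (n : ℕ) :
    ∫ x in Ioi 0, (μ (Iic x)).toReal ^ n * ∫ y in Ioi x, y⁻¹ ∂μ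
      = (∫⁻ x in Ioi 0, μ (Iic x) ^ n * ∫⁻ y in Ioi x, ENNReal.ofReal y⁻¹ ∂μ).toReal := by
  have hmeas : Measurable fun x => μ (Iic x) ^ n * ∫⁻ y in Ioi x, ENNReal.ofReal y⁻¹ ∂μ :=
    ((Monotone.measurable fun _ _ h => measure_mono (Iic_subset_Iic.2 h)).pow_const n).mul
      (Antitone.measurable fun _ _ h => lintegral_mono_set (Ioi_subset_Ioi h))
  have hfin : ∀ᵐ x ∂volume.restrict (Ioi (0 : ℝ)),
      μ (Iic x) ^ n * ∫⁻ y in Ioi x, ENNReal.ofReal y⁻¹ ∂μ < ∞ := by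
    filter_upwards [ae_restrict_mem measurableSet_Ioi] with x hx
    refine ENNReal.mul_lt_top (ENNReal.pow_lt_top (measure_lt_top μ _)) ?_
    calc ∫⁻ y in Ioi x, ENNReal.ofReal y⁻¹ ∂μ ≤ ∫⁻ _ in Ioi x, ENNReal.ofReal x⁻¹ ∂μ :=
          setLIntegral_mono measurable_const fun y hy =>
            ENNReal.ofReal_le_ofReal (inv_anti₀ hx hy.out.le)
      _ < ∞ := by
          rw [setLIntegral_const]
          exact ENNReal.mul_lt_top ENNReal.ofReal_lt_top (measure_lt_top μ _)
  rw [← integral_toReal hmeas.aemeasurable hfin]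
  refine setIntegral_congr_fun measurableSet_Ioi fun x hx => ?_
  rw [ENNReal.toReal_mul, ENNReal.toReal_pow, integral_eq_lintegral_of_nonneg_ae _
    measurable_inv.aestronglyMeasurable]
  filter_upwards [ae_restrict_mem measurableSet_Ioi] with y hy
  exact inv_nonneg.2 (hx.out.trans hy).le

section RandomVariables

variable {Ω : Type*} [MeasurableSpace Ω] {P : Measure Ω}

lemma lintegral_ofReal_one_sub_div_eq [SFinite P] {A B : Ω → ℝ} (hA : Measurable A)
    (hB : Measurable B) (hAB : ∀ᵐ ω ∂P, 0 < A ω ∧ A ω ≤ B ω) :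
    ∫⁻ ω, ENNReal.ofReal (1 - A ω / B ω) ∂P
      = ∫⁻ x in Ioi 0,
          ∫⁻ ω, (Ico (A ω) (B ω)).indicator (fun _ => ENNReal.ofReal (B ω)⁻¹) x ∂P := by
  have hIco : MeasurableSet {p : Ω × ℝ | p.2 ∈ Ico (A p.1) (B p.1)} :=
    (measurableSet_le (hA.comp measurable_fst) measurable_snd).inter
      (measurableSet_lt measurable_snd (hB.comp measurable_fst))
  rw [lintegral_congr_ae (hAB.mono fun ω h => ofReal_one_sub_div_eq_setLIntegral h.1 h.2)]
  exact lintegral_lintegral_swap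
    (Measurable.ite hIco (hB.comp measurable_fst).inv.ennreal_ofReal measurable_const).aemeasurable

lemma integral_eq_one_sub_toReal_lintegral [IsProbabilityMeasure P] {Y : Ω → ℝ}
    (hY : AEStronglyMeasurable Y P) (h : ∀ᵐ ω ∂P, 0 ≤ Y ω ∧ Y ω ≤ 1) :
    ∫ ω, Y ω ∂P = 1 - (∫⁻ ω, ENNReal.ofReal (1 - Y ω) ∂P).toReal := by
  have hYint : Integrable Y P := (integrable_const (1 : ℝ)).mono' hY
    (h.mono fun ω hω => by rw [Real.norm_eq_abs, abs_le]; constructor <;> linarith)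
  rw [← integral_eq_lintegral_of_nonneg_ae (h.mono fun ω hω => sub_nonneg.2 hω.2)
      (aestronglyMeasurable_const.sub hY), integral_sub (integrable_const 1) hYint]
  simp

lemma integral_div_eq_one_sub_toReal_lintegral_indicator_Ico [IsProbabilityMeasure P]
    {A B : Ω → ℝ} (hA : Measurable A) (hB : Measurable B)
    (hAB : ∀ᵐ ω ∂P, 0 < A ω ∧ A ω ≤ B ω) :
    ∫ ω, A ω / B ω ∂P = 1 - (∫⁻ x in Ioi 0,
      ∫⁻ ω, (Ico (A ω) (B ω)).indicator (fun _ => ENNReal.ofReal (B ω)⁻¹) x ∂P).toReal := by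
  rw [← lintegral_ofReal_one_sub_div_eq hA hB hAB]
  exact integral_eq_one_sub_toReal_lintegral (hA.div hB).aestronglyMeasurable <| hAB.mono
    fun ω h => ⟨div_nonneg h.1.le (h.1.trans_le h.2).le,
      div_le_one_of_le₀ h.2 (h.1.trans_le h.2).le⟩

variable {X : ℕ → Ω → ℝ} {m : ℕ}

lemma measurable_groupMax (hmeas : ∀ i, Measurable (X i)) (hm : m ≠ 0) :
    Measurable fun ω => groupMax m fun j => X j ω := by
  convert Finset.measurable_sup' (Finset.nonempty_range_iff.2 hm) fun i _ => hmeas i using 1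
  ext ω
  rw [Finset.sup'_apply, groupMax_eq_sup' _ hm]

lemma measurable_groupSecondMax (hmeas : ∀ i, Measurable (X i)) (hm : 2 ≤ m) :
    Measurable fun ω => groupSecondMax m fun j => X j ω := by
  convert Finset.measurable_sup' (offDiag_range_nonempty hm)
    fun p _ => (hmeas p.1).min (hmeas p.2) using 1
  ext ω
  rw [Finset.sup'_apply, groupSecondMax_eq_sup' _ hm]

variable {μ : Measure ℝ}

lemma lintegral_prod_soleExceedanceFactor (hmeas : ∀ i, Measurable (X i))
    (hindep : iIndepFun X P) (hdist : ∀ i, P.map (X i) = μ) (x : ℝ) {j : ℕ} (hj : j < m) :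
    ∫⁻ ω, ∏ k ∈ Finset.range m, soleExceedanceFactor x j k (X k ω) ∂P
      = μ (Iic x) ^ (m - 1) * ∫⁻ y in Ioi x, ENNReal.ofReal y⁻¹ ∂μ := by
  have hfactor (k : ℕ) : ∫⁻ ω, soleExceedanceFactor x j k (X k ω) ∂P
      = ∫⁻ y, soleExceedanceFactor x j k y ∂μ := by
    rw [← hdist k, lintegral_map (measurable_soleExceedanceFactor x k) (hmeas k)]
  calc ∫⁻ ω, ∏ k ∈ Finset.range m, soleExceedanceFactor x j k (X k ω) ∂P
      = ∏ k ∈ Finset.range m, ∫⁻ y, soleExceedanceFactor x j k y ∂μ := by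
        rw [← Finset.prod_congr rfl fun k _ => hfactor k]
        exact lintegral_prod_eq_prod_lintegral_of_indepFun _ _
          (hindep.comp _ fun k => measurable_soleExceedanceFactor x k)
          fun k => (measurable_soleExceedanceFactor x k).comp (hmeas k)
    _ = μ (Iic x) ^ (m - 1) * ∫⁻ y in Ioi x, ENNReal.ofReal y⁻¹ ∂μ := by
        rw [← Finset.mul_prod_erase _ _ (Finset.mem_range.2 hj),
          lintegral_soleExceedanceFactor_self,
          Finset.prod_congr rfl fun k hk =>
            lintegral_soleExceedanceFactor_of_ne x μ (Finset.ne_of_mem_erase hk),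
          Finset.prod_const, Finset.card_erase_of_mem (Finset.mem_range.2 hj),
          Finset.card_range, mul_comm]

lemma lintegral_indicator_Ico_groupSecondMax_groupMax (hmeas : ∀ i, Measurable (X i))
    (hindep : iIndepFun X P) (hdist : ∀ i, P.map (X i) = μ) (hm : 2 ≤ m) (x : ℝ) :
    ∫⁻ ω, (Ico (groupSecondMax m fun j => X j ω) (groupMax m fun j => X j ω)).indicator
        (fun _ => ENNReal.ofReal (groupMax m fun j => X j ω)⁻¹) x ∂P
      = m * (μ (Iic x) ^ (m - 1) * ∫⁻ y in Ioi x, ENNReal.ofReal y⁻¹ ∂μ) := by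
  have hsum (ω : Ω) :
      (Ico (groupSecondMax m fun j => X j ω) (groupMax m fun j => X j ω)).indicator
        (fun _ => ENNReal.ofReal (groupMax m fun j => X j ω)⁻¹) x
      = ∑ j ∈ Finset.range m, ∏ k ∈ Finset.range m, soleExceedanceFactor x j k (X k ω) := by
    rw [indicator_Ico_groupSecondMax_groupMax _ hm]
    exact Finset.sum_congr rfl fun j hj =>
      (prod_soleExceedanceFactor x (Finset.mem_range.1 hj) fun k => X k ω).symm
  rw [lintegral_congr hsum, lintegral_finsetSum _ fun j _ => Finset.measurable_prod _
      fun k _ => by exact (measurable_soleExceedanceFactor x k).comp (hmeas k),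
    Finset.sum_congr rfl fun j hj =>
      lintegral_prod_soleExceedanceFactor hmeas hindep hdist x (Finset.mem_range.1 hj),
    Finset.sum_const, Finset.card_range, nsmul_eq_mul]

end RandomVariables

theorem expectation_ratio_formula_general
    {Ω : Type*} [MeasurableSpace Ω] (P : Measure Ω) [IsProbabilityMeasure P]
    (m : ℕ) (hm : 2 ≤ m)
    (X : ℕ → Ω → ℝ) (μ : Measure ℝ) [IsProbabilityMeasure μ]
    (hmeas : ∀ i, Measurable (X i))
    (hindep : iIndepFun X P)
    (hdist : ∀ i, Measure.map (X i) P = μ)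
    (hpos : ∀ i, ∀ᵐ ω ∂P, 0 < X i ω)
    (F : ℝ → ℝ) (hF : ∀ x, F x = (μ (Set.Iic x)).toReal) :
    (∫ ω, groupSecondMax m (fun j => X j ω) / groupMax m (fun j => X j ω) ∂P)
      = 1 - (m : ℝ) *
        ∫ x in Set.Ioi (0 : ℝ), (F x) ^ (m - 1) * ∫ y in Set.Ioi x, y⁻¹ ∂μ := by
  have hM1 := measurable_groupMax hmeas (m := m) (by omega)
  have hM2 := measurable_groupSecondMax hmeas hm
  have hM : ∀ᵐ ω ∂P, 0 < (groupSecondMax m fun j => X j ω) ∧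
      (groupSecondMax m fun j => X j ω) ≤ groupMax m fun j => X j ω := by
    filter_upwards [ae_all_iff.2 hpos] with ω hω
    exact ⟨groupSecondMax_pos _ hm fun j _ => hω j, groupSecondMax_le_groupMax _ hm⟩
  simp_rw [hF]
  rw [integral_div_eq_one_sub_toReal_lintegral_indicator_Ico hM2 hM1 hM,
    lintegral_congr fun x =>
      lintegral_indicator_Ico_groupSecondMax_groupMax hmeas hindep hdist hm x,
    lintegral_const_mul' _ _ (ENNReal.natCast_ne_top m), ENNReal.toReal_mul,
    ENNReal.toReal_natCast, integral_toReal_pow_mul_setIntegral_inv]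

/-- **Expectation formula for the ratio of the two largest order statistics.**
If `X 0, …, X (m-1)` are i.i.d. positive random variables with continuous distribution
function `F` possessing a density, and `M⁽¹⁾ ≥ M⁽²⁾` are the two largest order
statistics (`m ≥ 2`), then
`E[M⁽²⁾/M⁽¹⁾] = 1 - m ∫₀^∞ F^(m-1)(x₂) (∫_{x₂}^∞ x₁⁻¹ dF(x₁)) dx₂`. -/
theorem expectation_ratio_formula
    {Ω : Type*} [MeasurableSpace Ω] (P : Measure Ω) [IsProbabilityMeasure P]
    (m : ℕ) (hm : 2 ≤ m)
    (X : ℕ → Ω → ℝ) (μ : Measure ℝ) [IsProbabilityMeasure μ]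
    (hmeas : ∀ i, Measurable (X i))
    (hindep : iIndepFun X P)
    (hdist : ∀ i, Measure.map (X i) P = μ)
    (hpos : ∀ i, ∀ᵐ ω ∂P, 0 < X i ω)
    (F : ℝ → ℝ) (hF : ∀ x, F x = (μ (Set.Iic x)).toReal)
    (hFcont : Continuous F)
    (hdens : μ ≪ volume) :
    (∫ ω, groupSecondMax m (fun j => X j ω) / groupMax m (fun j => X j ω) ∂P)
      = 1 - (m : ℝ) *
        ∫ x in Set.Ioi (0 : ℝ), (F x) ^ (m - 1) * ∫ y in Set.Ioi x, y⁻¹ ∂μ :=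
  expectation_ratio_formula_general P m hm X μ hmeas hindep hdist hpos F hF
end

section
/- Let F be a distribution function satisfying the second-order condition 1 − F(x) = C₁x^{−α} + C₂x^{−β} + o(x^{−β}) as x → ∞ with 0 < α < β < ∞ and C₁ > 0, and let a_m = κ m^{1/α} (ln m)^{−1/α} with 0 < κ < (C₁/ζ)^{1/α}, where ζ = (β−α)/α. Then K_{m,1} := m ∫₀^{a_m} F^{m−1}(x₂) ( ∫_{x₂}^∞ x₁^{−1} dF(x₁) ) dx₂ = o(m^{−ζ}) as m → ∞. -/
/-!
Write `g x = ∫_{(x,∞)} y⁻¹ dμ(y)`, `n = m - 1`, and split `(0, a_m)` at a fixed large `M`.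
For `x ≥ M` the second-order condition gives, for any `c < C₁ < D`, the tail bounds
`c x^(-α) ≤ 1 - F x ≤ D x^(-α)`, hence `F(x)^n ≤ exp(-n c x^(-α))` and
`g x ≤ x⁻¹ (1 - F x) ≤ D x^(-α-1)`. By Tonelli `∫₀^∞ g ≤ μ(0,∞) ≤ 1`, so the part over `(0, M)`
is at most `F(M)^n ≤ exp(-n c M^(-α))`, exponentially small in `m`. The resulting integrand
has the explicit primitive `exp(-n c x^(-α)) / (n c α)`, so the part over `[M, a_m]` is at most
`D exp(-n c a_m^(-α)) / (n c α)`. As `a_m^(-α) = log m / (κ^α m)`, after multiplying by `m` this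
is `O(m^(-ρ))` with `ρ = c / κ^α`, and the hypothesis `κ < (C₁/ζ)^(1/α)` says exactly that `c`
can be chosen with `ζ κ^α < c < C₁`, i.e. `ρ > ζ`.
-/

open MeasureTheory ProbabilityTheory Filter Set Asymptotics
open scoped ENNReal NNReal Topology

open Real

lemma ofReal_setIntegral_le_setLIntegral {X : Type*} [MeasurableSpace X] {μ : Measure X}
    {s : Set X} {f : X → ℝ} (hs : MeasurableSet s) (hf : ∀ x ∈ s, 0 ≤ f x) :
    ENNReal.ofReal (∫ x in s, f x ∂μ) ≤ ∫⁻ x in s, ENNReal.ofReal (f x) ∂μ :=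
  (Real.ofReal_le_enorm _).trans <| (enorm_integral_le_lintegral_enorm _).trans_eq <|
    setLIntegral_congr_fun hs fun x hx => Real.enorm_of_nonneg (hf x hx)

lemma setIntegral_Ioo_le_add_of_lintegral_le {f : ℝ → ℝ} {M A B₁ B₂ : ℝ}
    (hf : ∀ x ∈ Ioo 0 A, 0 ≤ f x) (hB₁ : 0 ≤ B₁) (hB₂ : 0 ≤ B₂)
    (h₁ : ∫⁻ x in Ioo 0 M, ENNReal.ofReal (f x) ≤ ENNReal.ofReal B₁)
    (h₂ : ∫⁻ x in Icc M A, ENNReal.ofReal (f x) ≤ ENNReal.ofReal B₂) :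
    ∫ x in Ioo 0 A, f x ≤ B₁ + B₂ := by
  have hsplit : Ioo 0 A ⊆ Ioo 0 M ∪ Icc M A := fun x hx =>
    (lt_or_ge x M).imp (fun h => ⟨hx.1, h⟩) fun h => ⟨h, hx.2.le⟩
  rw [← ENNReal.ofReal_le_ofReal_iff (add_nonneg hB₁ hB₂)]
  calc ENNReal.ofReal (∫ x in Ioo 0 A, f x)
      ≤ ∫⁻ x in Ioo 0 A, ENNReal.ofReal (f x) :=
        ofReal_setIntegral_le_setLIntegral measurableSet_Ioo hf
    _ ≤ ∫⁻ x in Ioo 0 M ∪ Icc M A, ENNReal.ofReal (f x) := lintegral_mono_set hsplit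
    _ ≤ (∫⁻ x in Ioo 0 M, ENNReal.ofReal (f x)) + ∫⁻ x in Icc M A, ENNReal.ofReal (f x) :=
        lintegral_union_le _ _ _
    _ ≤ ENNReal.ofReal (B₁ + B₂) := by
        rw [ENNReal.ofReal_add hB₁ hB₂]
        exact add_le_add h₁ h₂

noncomputable def tailInvIntegral (μ : Measure ℝ) (x : ℝ) : ℝ :=
  ∫ y in Ioi x, y⁻¹ ∂μ

section tailInvIntegral

variable (μ : Measure ℝ)

lemma tailInvIntegral_nonneg {x : ℝ} (hx : 0 ≤ x) : 0 ≤ tailInvIntegral μ x :=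
  setIntegral_nonneg measurableSet_Ioi fun _ hy => inv_nonneg.2 (hx.trans (le_of_lt hy))

lemma tailInvIntegral_le [IsFiniteMeasure μ] {x : ℝ} (hx : 0 < x) :
    tailInvIntegral μ x ≤ x⁻¹ * μ.real (Ioi x) := by
  refine (Real.le_norm_self _).trans <|
    norm_setIntegral_le_of_norm_le_const (measure_lt_top μ _) fun y hy => ?_
  rw [norm_inv, Real.norm_of_nonneg (hx.trans hy).le]
  exact inv_anti₀ hx (le_of_lt hy)

lemma ofReal_tailInvIntegral_le {x : ℝ} (hx : 0 ≤ x) :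
    ENNReal.ofReal (tailInvIntegral μ x) ≤ ∫⁻ y in Ioi x, ENNReal.ofReal y⁻¹ ∂μ :=
  ofReal_setIntegral_le_setLIntegral measurableSet_Ioi fun _ hy =>
    inv_nonneg.2 (hx.trans (le_of_lt hy))

lemma lintegral_Ioi_zero_indicator_Iio_ofReal_inv (y : ℝ) :
    ∫⁻ x in Ioi 0, (Iio y).indicator (fun _ => ENNReal.ofReal y⁻¹) x = (Ioi 0).indicator 1 y := by
  rcases le_or_gt y 0 with hy | hy
  · simp [hy, ENNReal.ofReal_eq_zero.2 (inv_nonpos.2 hy)]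
  · rw [lintegral_indicator measurableSet_Iio, setLIntegral_const,
      Measure.restrict_apply measurableSet_Iio, Iio_inter_Ioi, Real.volume_Ioo, sub_zero,
      ← ENNReal.ofReal_mul (inv_nonneg.2 hy.le), inv_mul_cancel₀ hy.ne']
    simp [hy]

lemma lintegral_ofReal_tailInvIntegral_le [SFinite μ] :
    ∫⁻ x in Ioi 0, ENNReal.ofReal (tailInvIntegral μ x) ≤ μ (Ioi 0) := by
  have hmeas : Measurable (Function.uncurry fun x y : ℝ =>
      (Ioi x).indicator (fun y => ENNReal.ofReal y⁻¹) y) := by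
    change Measurable ({p : ℝ × ℝ | p.1 < p.2}.indicator fun p => ENNReal.ofReal p.2⁻¹)
    exact measurable_snd.inv.ennreal_ofReal.indicator
      (measurableSet_lt measurable_fst measurable_snd)
  calc ∫⁻ x in Ioi 0, ENNReal.ofReal (tailInvIntegral μ x)
      ≤ ∫⁻ x in Ioi 0, ∫⁻ y, (Ioi x).indicator (fun y => ENNReal.ofReal y⁻¹) y ∂μ := by
        refine setLIntegral_mono' measurableSet_Ioi fun x hx => ?_
        rw [lintegral_indicator measurableSet_Ioi]
        exact ofReal_tailInvIntegral_le μ (le_of_lt hx)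
    _ = ∫⁻ y, (∫⁻ x in Ioi 0, (Iio y).indicator (fun _ => ENNReal.ofReal y⁻¹) x) ∂μ := by
        rw [lintegral_lintegral_swap hmeas.aemeasurable]
        rfl -- `y ∈ Ioi x` and `x ∈ Iio y` both unfold to `x < y`
    _ = μ (Ioi 0) := by
        simp_rw [lintegral_Ioi_zero_indicator_Iio_ofReal_inv]
        exact lintegral_indicator_one measurableSet_Ioi

lemma lintegral_Ioo_ofReal_mul_tailInvIntegral_le [SFinite μ] {f : ℝ → ℝ}
    {K M : ℝ} (hf : ∀ x ∈ Ioo 0 M, 0 ≤ f x ∧ f x ≤ K) :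
    ∫⁻ x in Ioo 0 M, ENNReal.ofReal (f x * tailInvIntegral μ x) ≤ ENNReal.ofReal K * μ (Ioi 0) :=
  calc ∫⁻ x in Ioo 0 M, ENNReal.ofReal (f x * tailInvIntegral μ x)
      ≤ ∫⁻ x in Ioo 0 M, ENNReal.ofReal K * ENNReal.ofReal (tailInvIntegral μ x) := by
        refine setLIntegral_mono' measurableSet_Ioo fun x hx => ?_
        rw [← ENNReal.ofReal_mul ((hf x hx).1.trans (hf x hx).2)]
        exact ENNReal.ofReal_le_ofReal
          (mul_le_mul_of_nonneg_right (hf x hx).2 (tailInvIntegral_nonneg μ hx.1.le))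
    _ = ENNReal.ofReal K * ∫⁻ x in Ioo 0 M, ENNReal.ofReal (tailInvIntegral μ x) :=
        lintegral_const_mul' _ _ ENNReal.ofReal_ne_top
    _ ≤ ENNReal.ofReal K * μ (Ioi 0) := by
        gcongr
        exact (lintegral_mono_set Ioo_subset_Ioi_self).trans
          (lintegral_ofReal_tailInvIntegral_le μ)

end tailInvIntegral

lemma hasDerivAt_exp_neg_mul_rpow_neg {α T x : ℝ} (hx : 0 < x) :
    HasDerivAt (fun x => exp (-T * x ^ (-α)))
      (T * α * (exp (-T * x ^ (-α)) * (x⁻¹ * x ^ (-α)))) x := by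
  have h := ((Real.hasDerivAt_rpow_const (p := -α) (Or.inl hx.ne')).const_mul (-T)).exp
  convert h using 1
  rw [Real.rpow_sub hx, Real.rpow_one]
  field_simp

lemma integral_exp_neg_mul_rpow_neg {α T M A : ℝ} (hα : α ≠ 0) (hT : T ≠ 0) (hM : 0 < M)
    (hA : 0 < A) :
    ∫ x in M..A, exp (-T * x ^ (-α)) * (x⁻¹ * x ^ (-α)) =
      (exp (-T * A ^ (-α)) - exp (-T * M ^ (-α))) / (T * α) := by
  have hpos : ∀ x ∈ uIcc M A, 0 < x := fun x hx => lt_of_lt_of_le (lt_min hM hA) hx.1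
  have hint : IntervalIntegrable (fun x => T * α * (exp (-T * x ^ (-α)) * (x⁻¹ * x ^ (-α))))
      volume M A := by
    apply ContinuousOn.intervalIntegrable
    intro x hx
    have hx := (hpos x hx).ne'
    apply ContinuousAt.continuousWithinAt
    fun_prop (disch := simp [hx])
  have hFTC := intervalIntegral.integral_eq_sub_of_hasDerivAt
    (fun x hx => hasDerivAt_exp_neg_mul_rpow_neg (α := α) (T := T) (hpos x hx)) hint
  rw [intervalIntegral.integral_const_mul] at hFTC
  rw [eq_div_iff (mul_ne_zero hT hα), ← hFTC]
  ring

lemma lintegral_Icc_ofReal_le_of_le_exp_neg_mul_rpow_neg {f : ℝ → ℝ} {α T D M A : ℝ}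
    (hα : 0 < α) (hT : 0 < T) (hD : 0 ≤ D) (hM : 0 < M)
    (hf : ∀ x ∈ Icc M A, f x ≤ D * (exp (-T * x ^ (-α)) * (x⁻¹ * x ^ (-α)))) :
    ∫⁻ x in Icc M A, ENNReal.ofReal (f x) ≤
      ENNReal.ofReal (D * exp (-T * A ^ (-α)) / (T * α)) := by
  rcases lt_or_ge A M with hAM | hMA
  · simp [Icc_eq_empty_of_lt hAM]
  have hpos : ∀ x ∈ Icc M A, 0 < x := fun x hx => hM.trans_le hx.1
  have hint :
      IntegrableOn (fun x => D * (exp (-T * x ^ (-α)) * (x⁻¹ * x ^ (-α)))) (Icc M A) := by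
    apply ContinuousOn.integrableOn_Icc
    intro x hx
    have hx := (hpos x hx).ne'
    apply ContinuousAt.continuousWithinAt
    fun_prop (disch := simp [hx])
  have hnonneg : ∀ᵐ x ∂volume.restrict (Icc M A),
      0 ≤ D * (exp (-T * x ^ (-α)) * (x⁻¹ * x ^ (-α))) := by
    filter_upwards [ae_restrict_mem measurableSet_Icc] with x hx
    have := hpos x hx
    positivity
  calc ∫⁻ x in Icc M A, ENNReal.ofReal (f x)
      ≤ ∫⁻ x in Icc M A, ENNReal.ofReal (D * (exp (-T * x ^ (-α)) * (x⁻¹ * x ^ (-α)))) :=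
        setLIntegral_mono' measurableSet_Icc fun x hx => ENNReal.ofReal_le_ofReal (hf x hx)
    _ = ENNReal.ofReal (∫ x in Icc M A, D * (exp (-T * x ^ (-α)) * (x⁻¹ * x ^ (-α)))) :=
        (ofReal_integral_eq_lintegral_ofReal hint hnonneg).symm
    _ ≤ ENNReal.ofReal (D * exp (-T * A ^ (-α)) / (T * α)) := by
        rw [integral_Icc_eq_integral_Ioc, ← intervalIntegral.integral_of_le hMA,
          intervalIntegral.integral_const_mul,
          integral_exp_neg_mul_rpow_neg hα.ne' hT.ne' hM (hM.trans_le hMA), mul_div_assoc]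
        gcongr
        exact sub_le_self _ (exp_pos _).le

lemma pow_le_exp_neg_mul_one_sub {t : ℝ} (ht : 0 ≤ t) (n : ℕ) : t ^ n ≤ exp (-(n * (1 - t))) :=
  calc t ^ n ≤ exp (t - 1) ^ n := pow_le_pow_left₀ ht (by linarith [add_one_le_exp (t - 1)]) n
    _ = exp (-(n * (1 - t))) := by rw [← exp_nat_mul]; ring_nf

lemma measureReal_Ioi_eq_one_sub_cdf (μ : Measure ℝ) [IsProbabilityMeasure μ] (x : ℝ) :
    μ.real (Ioi x) = 1 - cdf μ x := by
  rw [cdf_eq_real, ← probReal_compl_eq_one_sub measurableSet_Iic, compl_Iic]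

theorem integral_Ioo_cdf_pow_mul_tailInvIntegral_le (μ : Measure ℝ) [IsProbabilityMeasure μ]
    {α c D M A : ℝ} {n : ℕ} (hn : n ≠ 0) (hα : 0 < α) (hc : 0 < c) (hD : 0 ≤ D) (hM : 0 < M)
    (htail : ∀ x, M ≤ x → c * x ^ (-α) ≤ 1 - cdf μ x ∧ 1 - cdf μ x ≤ D * x ^ (-α)) :
    ∫ x in Ioo 0 A, cdf μ x ^ n * tailInvIntegral μ x ≤
      exp (-(n * c) * M ^ (-α)) + D * exp (-(n * c) * A ^ (-α)) / (n * c * α) := by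
  set f := fun x => cdf μ x ^ n * tailInvIntegral μ x
  have hT : 0 < (n : ℝ) * c := mul_pos (Nat.cast_pos.2 (Nat.pos_of_ne_zero hn)) hc
  have hpow : ∀ x, M ≤ x → cdf μ x ^ n ≤ exp (-(n * c) * x ^ (-α)) := fun x hx =>
    (pow_le_exp_neg_mul_one_sub (cdf_nonneg μ x) n).trans <| exp_le_exp.2 <| by
      nlinarith [(htail x hx).1, (Nat.cast_nonneg n : (0 : ℝ) ≤ n)]
  have hnear : ∫⁻ x in Ioo 0 M, ENNReal.ofReal (f x) ≤
      ENNReal.ofReal (exp (-(n * c) * M ^ (-α))) := by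
    refine (lintegral_Ioo_ofReal_mul_tailInvIntegral_le μ fun x hx =>
      ⟨pow_nonneg (cdf_nonneg μ x) n, ?_⟩).trans (mul_le_of_le_one_right' prob_le_one)
    exact (pow_le_pow_left₀ (cdf_nonneg μ x) (monotone_cdf μ hx.2.le) n).trans (hpow M le_rfl)
  have hfar : ∫⁻ x in Icc M A, ENNReal.ofReal (f x) ≤
      ENNReal.ofReal (D * exp (-(n * c) * A ^ (-α)) / (n * c * α)) := by
    refine lintegral_Icc_ofReal_le_of_le_exp_neg_mul_rpow_neg hα hT hD hM fun x hx => ?_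
    have hx0 : 0 < x := hM.trans_le hx.1
    have hinv : tailInvIntegral μ x ≤ x⁻¹ * (D * x ^ (-α)) := by
      refine (tailInvIntegral_le μ hx0).trans ?_
      rw [measureReal_Ioi_eq_one_sub_cdf]
      exact mul_le_mul_of_nonneg_left (htail x hx.1).2 (inv_nonneg.2 hx0.le)
    calc f x ≤ exp (-(n * c) * x ^ (-α)) * (x⁻¹ * (D * x ^ (-α))) :=
          mul_le_mul (hpow x hx.1) hinv (tailInvIntegral_nonneg μ hx0.le) (exp_pos _).le
      _ = D * (exp (-(n * c) * x ^ (-α)) * (x⁻¹ * x ^ (-α))) := by ring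
  exact setIntegral_Ioo_le_add_of_lintegral_le (fun x hx =>
    mul_nonneg (pow_nonneg (cdf_nonneg μ x) n) (tailInvIntegral_nonneg μ hx.1.le))
    (exp_pos _).le (by positivity) hnear hfar

lemma isLittleO_rpow_rpow_atTop {a b : ℝ} (h : a < b) :
    (fun x : ℝ => x ^ a) =o[atTop] fun x => x ^ b := by
  have hlim : (fun x : ℝ => x ^ (a - b)) =o[atTop] fun _ => (1 : ℝ) := by
    rw [isLittleO_one_iff, ← neg_sub b a]
    exact tendsto_rpow_neg_atTop (sub_pos.2 h)
  refine (hlim.mul_isBigO (isBigO_refl (fun x : ℝ => x ^ b) atTop)).congr' ?_ ?_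
  · filter_upwards [eventually_gt_atTop 0] with x hx
    rw [← rpow_add hx, sub_add_cancel]
  · exact Eventually.of_forall fun x => one_mul _

lemma SecondOrderCondition.isLittleO_rpow_neg {F : ℝ → ℝ} {C₁ C₂ α β : ℝ}
    (h : SecondOrderCondition F C₁ C₂ α β) (hαβ : α < β) :
    (fun x => 1 - F x - C₁ * x ^ (-α)) =o[atTop] fun x => x ^ (-α) := by
  have hβα := isLittleO_rpow_rpow_atTop (neg_lt_neg hαβ)
  exact ((h.trans hβα).add (hβα.const_mul_left C₂)).congr_left fun x => by ring

lemma SecondOrderCondition.exists_tail_bounds {F : ℝ → ℝ} {C₁ C₂ α β : ℝ}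
    (h : SecondOrderCondition F C₁ C₂ α β) (hαβ : α < β) {c D : ℝ} (hc : c < C₁) (hD : C₁ < D) :
    ∃ M > 0, ∀ x, M ≤ x → c * x ^ (-α) ≤ 1 - F x ∧ 1 - F x ≤ D * x ^ (-α) := by
  have hε : 0 < min (C₁ - c) (D - C₁) := lt_min (sub_pos.2 hc) (sub_pos.2 hD)
  obtain ⟨M, hM⟩ := eventually_atTop.1 ((h.isLittleO_rpow_neg hαβ).bound hε)
  refine ⟨max M 1, by positivity, fun x hx => ?_⟩
  have hxα : 0 < x ^ (-α) := rpow_pos_of_pos (zero_lt_one.trans_le (le_of_max_le_right hx)) _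
  have hbound := hM x (le_of_max_le_left hx)
  rw [Real.norm_of_nonneg hxα.le, Real.norm_eq_abs, abs_le] at hbound
  have h₁ := mul_le_mul_of_nonneg_right (min_le_left (C₁ - c) (D - C₁)) hxα.le
  have h₂ := mul_le_mul_of_nonneg_right (min_le_right (C₁ - c) (D - C₁)) hxα.le
  constructor <;> linarith [hbound.1, hbound.2]

lemma isLittleO_mul_exp_neg_mul_sub_one {b : ℝ} (hb : 0 < b) (s : ℝ) :
    (fun x : ℝ => x * exp (-((x - 1) * b))) =o[atTop] fun x => x ^ s := by
  have h := ((isBigO_refl (fun x : ℝ => x) atTop).mul_isLittleO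
    (isLittleO_exp_neg_mul_rpow_atTop hb (s - 1))).const_mul_left (exp b)
  refine (h.congr_left fun x => ?_).congr' EventuallyEq.rfl ?_
  · rw [mul_left_comm, ← exp_add]
    ring_nf
  · filter_upwards [eventually_gt_atTop 0] with x hx
    rw [rpow_sub_one hx.ne', mul_div_cancel₀ _ hx.ne']

noncomputable def truncationLevel (κ α m : ℝ) : ℝ :=
  κ * m ^ (1 / α) * log m ^ (-(1 / α))

lemma truncationLevel_rpow_neg {κ α m : ℝ} (hκ : 0 ≤ κ) (hα : α ≠ 0) (hm : 1 ≤ m) :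
    truncationLevel κ α m ^ (-α) = log m / (κ ^ α * m) := by
  have hm0 : 0 ≤ m := zero_le_one.trans hm
  have hlog : 0 ≤ log m := log_nonneg hm
  rw [truncationLevel, mul_rpow (by positivity) (by positivity), mul_rpow hκ (by positivity),
    ← rpow_mul hm0, ← rpow_mul hlog, rpow_neg hκ, show 1 / α * -α = -1 by field_simp,
    show -(1 / α) * -α = 1 by field_simp, rpow_neg_one, rpow_one]
  ring

lemma exp_neg_mul_truncationLevel_rpow_neg_le {κ α c m : ℝ} (hκ : 0 < κ) (hα : 0 < α)
    (hc : 0 ≤ c) (hm : 1 ≤ m) :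
    exp (-((m - 1) * c) * truncationLevel κ α m ^ (-α)) ≤
      exp (c / κ ^ α) * m ^ (-(c / κ ^ α)) := by
  have hm0 : 0 < m := zero_lt_one.trans_le hm
  have hκα : 0 < κ ^ α := rpow_pos_of_pos hκ α
  have hlog : log m / m ≤ 1 := (div_le_one hm0).2 ((log_le_sub_one_of_pos hm0).trans (by linarith))
  rw [truncationLevel_rpow_neg hκ.le hα.ne' hm, rpow_def_of_pos hm0, ← exp_add, exp_le_exp]
  have hρ : 0 ≤ c / κ ^ α := by positivity
  calc -((m - 1) * c) * (log m / (κ ^ α * m))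
        = c / κ ^ α * (log m / m) - log m * (c / κ ^ α) := by
        field_simp
        ring
    _ ≤ c / κ ^ α + log m * -(c / κ ^ α) := by nlinarith [mul_le_mul_of_nonneg_left hlog hρ]

lemma isBigO_mul_exp_neg_mul_truncationLevel {κ α c D : ℝ} (hκ : 0 < κ) (hα : 0 < α)
    (hc : 0 < c) (hD : 0 ≤ D) :
    (fun m : ℝ => m * (D * exp (-((m - 1) * c) * truncationLevel κ α m ^ (-α)) /
        ((m - 1) * c * α))) =O[atTop] fun m => m ^ (-(c / κ ^ α)) := by
  refine IsBigO.of_bound (2 * (D / (c * α)) * exp (c / κ ^ α)) ?_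
  filter_upwards [eventually_ge_atTop 2] with m hm
  have hm1 : 0 < m - 1 := by linarith
  have hratio : m / (m - 1) ≤ 2 := (div_le_iff₀ hm1).2 (by linarith)
  have hE := exp_neg_mul_truncationLevel_rpow_neg_le hκ hα hc.le (by linarith : 1 ≤ m)
  rw [Real.norm_of_nonneg (by positivity), Real.norm_of_nonneg (by positivity)]
  calc m * (D * exp (-((m - 1) * c) * truncationLevel κ α m ^ (-α)) / ((m - 1) * c * α))
      = m / (m - 1) * (D / (c * α)) *
          exp (-((m - 1) * c) * truncationLevel κ α m ^ (-α)) := by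
        field_simp
    _ ≤ 2 * (D / (c * α)) * (exp (c / κ ^ α) * m ^ (-(c / κ ^ α))) := by gcongr
    _ = _ := by ring

/-- **The lower part of the bias integral is negligible.** Under the second-order
condition with `0 < α < β < ∞`, `C₁ > 0`, and with the truncation level
`a_m = κ m^(1/α) (ln m)^(-1/α)` where `0 < κ < (C₁/ζ)^(1/α)`, one has
`K_{m,1} = m ∫₀^{a_m} F^(m-1)(x₂)(∫_{x₂}^∞ x₁⁻¹ dF(x₁)) dx₂ = o(m^(-ζ))` as `m → ∞`. -/
theorem lower_integral_negligible
    (μ : Measure ℝ) [IsProbabilityMeasure μ]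
    (F : ℝ → ℝ) (hF : ∀ x, F x = (μ (Set.Iic x)).toReal)
    (C₁ C₂ α β : ℝ) (hα : 0 < α) (hαβ : α < β) (hC₁ : 0 < C₁)
    (hso : SecondOrderCondition F C₁ C₂ α β)
    (ζ : ℝ) (hζ : ζ = (β - α) / α)
    (κ : ℝ) (hκ : 0 < κ) (hκ' : κ < (C₁ / ζ) ^ (1 / α))
    (a : ℕ → ℝ)
    (ha : ∀ m : ℕ, a m = κ * (m : ℝ) ^ (1 / α) * (Real.log m) ^ (-(1 / α))) :
    (fun m : ℕ => (m : ℝ) *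
        ∫ x in Set.Ioo (0 : ℝ) (a m), (F x) ^ (m - 1) * ∫ y in Set.Ioi x, y⁻¹ ∂μ)
      =o[atTop] fun m : ℕ => (m : ℝ) ^ (-ζ) := by
  obtain rfl : F = cdf μ := funext fun x => (hF x).trans (cdf_eq_real μ x).symm
  obtain rfl : a = fun m : ℕ => truncationLevel κ α m := funext ha
  have hζ0 : 0 < ζ := hζ ▸ div_pos (sub_pos.2 hαβ) hα
  have hκα : 0 < κ ^ α := rpow_pos_of_pos hκ α
  rw [one_div, lt_rpow_inv_iff_of_pos hκ.le (div_nonneg hC₁.le hζ0.le) hα] at hκ'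
  obtain ⟨c, hζc, hcC₁⟩ := exists_between ((lt_div_iff₀' hζ0).1 hκ')
  have hc : 0 < c := (mul_pos hζ0 hκα).trans hζc
  have hρ : -(c / κ ^ α) < -ζ := neg_lt_neg ((lt_div_iff₀ hκα).2 hζc)
  obtain ⟨M, hM, htail⟩ := hso.exists_tail_bounds hαβ hcC₁ (lt_add_one C₁)
  have hnear := isLittleO_mul_exp_neg_mul_sub_one (mul_pos hc (rpow_pos_of_pos hM (-α))) (-ζ)
  have hfar := (isBigO_mul_exp_neg_mul_truncationLevel hκ hα hc (by positivity : 0 ≤ C₁ + 1)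
    ).trans_isLittleO (isLittleO_rpow_rpow_atTop hρ)
  refine IsBigO.trans_isLittleO ?_ ((hnear.add hfar).comp_tendsto tendsto_natCast_atTop_atTop)
  refine IsBigO.of_bound 1 ?_
  filter_upwards [eventually_ge_atTop 2] with m hm
  have hK := integral_Ioo_cdf_pow_mul_tailInvIntegral_le μ (n := m - 1)
    (A := truncationLevel κ α m) (by omega) hα hc (by positivity) hM htail
  rw [Nat.cast_pred (by omega)] at hK
  rw [one_mul, Real.norm_eq_abs, Real.norm_eq_abs]
  refine abs_le_abs_of_nonneg (mul_nonneg m.cast_nonneg (setIntegral_nonneg measurableSet_Ioo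
    fun x hx => mul_nonneg (pow_nonneg (cdf_nonneg μ x) _) (tailInvIntegral_nonneg μ hx.1.le))) ?_
  refine (mul_le_mul_of_nonneg_left hK m.cast_nonneg).trans_eq ?_
  simp only [Function.comp_apply, neg_mul, mul_assoc, mul_add]
end

section
/- Let 0 < α < β < ∞, C₁ > 0, C₂ ∈ ℝ, set F̃(x) = 1 − C₁x^{−α} − C₂x^{−β}, ζ = (β−α)/α, and a_m = κ m^{1/α} (ln m)^{−1/α} with 0 < κ < (C₁/ζ)^{1/α}. Then K''_{m,2} := C₂ β m (1/(β+1) − 1/(α+1)) ∫_{a_m}^∞ x^{−β−1} F̃^{m−1}(x) dx satisfies K''_{m,2} ∼ −χ m^{−ζ} as m → ∞, where χ = C₂ β ζ Γ(ζ+1) / (C₁^{ζ+1}(α+1)(β+1)). -/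
/-!
The substitution `s = m C₁ x^(-α)` turns `m ∫_{a_m}^∞ x^(-β-1) F̃(x)^(m-1) dx` into
`(α C₁^(ζ+1))⁻¹ m^(-ζ) ∫_0^{c log m} s^ζ (1 - s/m - D (s/m)^(1+ζ))^(m-1) ds` with
`c = C₁ κ^(-α)` and `D = C₂ / C₁^(1+ζ)`. Since `t ↦ 1 - t - D t^(1+ζ)` has derivative `-1`
at `0`, the integrand tends to `s^ζ e^(-s)` and is dominated by `s^ζ e^(-s/4)`, so by dominated
convergence the last integral tends to `Γ(ζ+1)`.
-/

open MeasureTheory Filter Set Asymptotics Real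
open scoped Topology

lemma exists_abs_le_exp_of_hasDerivAt {G : ℝ → ℝ} (hG0 : G 0 = 1) (hG : HasDerivAt G (-1) 0) :
    ∃ δ > 0, ∀ t ∈ Ioo 0 δ, |G t| ≤ exp (-(t / 2)) := by
  have hslope : ∀ᶠ t in 𝓝[>] 0, slope G 0 t ∈ Ioo (-(3 / 2)) (-(1 / 2)) ∧ t < 1 / 2 :=
    ((hG.tendsto_slope.mono_left (nhdsGT_le_nhdsNE 0)).eventually
      (Ioo_mem_nhds (by norm_num) (by norm_num))).and
      (eventually_nhdsWithin_of_eventually_nhds (eventually_lt_nhds (by norm_num)))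
  obtain ⟨δ, hδ, hsub⟩ := mem_nhdsGT_iff_exists_Ioo_subset.mp hslope
  refine ⟨δ, hδ, fun t ht => ?_⟩
  obtain ⟨⟨hlo, hhi⟩, ht2⟩ := hsub ht
  rw [slope_def_field, hG0, sub_zero] at hlo hhi
  rw [lt_div_iff₀ ht.1] at hlo
  rw [div_lt_iff₀ ht.1] at hhi
  rw [abs_of_pos (by linarith)]
  linarith [add_one_le_exp (-(t / 2))]

lemma tendsto_pow_sub_one_of_hasDerivAt {G : ℝ → ℝ} {d : ℝ} (hG0 : G 0 = 1)
    (hG : HasDerivAt G d 0) (s : ℝ) :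
    Tendsto (fun m : ℕ => G (s / m) ^ (m - 1)) atTop (𝓝 (exp (d * s))) := by
  have hs_div : Tendsto (fun m : ℕ => s / (m : ℝ)) atTop (𝓝 0) :=
    tendsto_const_div_atTop_nhds_zero_nat s
  have hmul : Tendsto (fun m : ℕ => (m : ℝ) * (G (s / m) - 1)) atTop (𝓝 (d * s)) := by
    rcases eq_or_ne s 0 with rfl | hs
    · simp [hG0]
    have hs_ne : Tendsto (fun m : ℕ => s / (m : ℝ)) atTop (𝓝[≠] 0) :=
      tendsto_nhdsWithin_iff.mpr ⟨hs_div, by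
        filter_upwards [eventually_ne_atTop 0] with m hm
        exact div_ne_zero hs (Nat.cast_ne_zero.mpr hm)⟩
    refine ((hG.tendsto_slope.comp hs_ne).mul_const s).congr' ?_
    filter_upwards [eventually_ne_atTop 0] with m hm
    have hm' : (m : ℝ) ≠ 0 := Nat.cast_ne_zero.mpr hm
    simp only [Function.comp_apply, slope_def_field, hG0, sub_zero]
    field_simp
  have hpow : Tendsto (fun m : ℕ => G (s / m) ^ m) atTop (𝓝 (exp (d * s))) := by
    simpa using Real.tendsto_one_add_pow_exp_of_tendsto hmul
  have hG1 : Tendsto (fun m : ℕ => G (s / m)) atTop (𝓝 1) :=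
    hG0 ▸ hG.continuousAt.tendsto.comp hs_div
  refine (div_one (exp (d * s)) ▸ hpow.div hG1 one_ne_zero).congr' ?_
  filter_upwards [hG1.eventually_ne one_ne_zero, eventually_ne_atTop 0] with m hGm hm
  rw [Pi.div_apply, div_eq_iff hGm, ← pow_succ,
    Nat.sub_add_cancel (Nat.one_le_iff_ne_zero.mpr hm)]

lemma exp_neg_div_pow_sub_one_le {s : ℝ} (hs : 0 ≤ s) {m : ℕ} (hm : 2 ≤ m) :
    exp (-(s / m / 2)) ^ (m - 1) ≤ exp (-(s / 4)) := by
  have hm' : (2 : ℝ) ≤ m := by exact_mod_cast hm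
  rw [← exp_nat_mul, exp_le_exp, Nat.cast_sub (by omega), Nat.cast_one]
  rw [show ((m : ℝ) - 1) * -(s / m / 2) = -(s * ((m - 1) / (2 * m))) by field_simp]
  have : (1 : ℝ) / 4 ≤ (m - 1) / (2 * m) := by
    rw [div_le_div_iff₀ (by norm_num) (by positivity)]; linarith
  nlinarith

theorem tendsto_integral_rpow_mul_pow_Gamma {ζ : ℝ} (hζ : -1 < ζ) {G : ℝ → ℝ}
    (hGm : Measurable G) (hG0 : G 0 = 1) (hG : HasDerivAt G (-1) 0) {L : ℕ → ℝ}
    (hL : Tendsto L atTop atTop) (hLm : Tendsto (fun m : ℕ => L m / m) atTop (𝓝 0)) :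
    Tendsto (fun m : ℕ => ∫ s in Ioo 0 (L m), s ^ ζ * G (s / m) ^ (m - 1)) atTop
      (𝓝 (Gamma (ζ + 1))) := by
  obtain ⟨δ, hδ, hGδ⟩ := exists_abs_le_exp_of_hasDerivAt hG0 hG
  set F : ℕ → ℝ → ℝ := fun m =>
    (Iio (L m)).indicator fun s => s ^ ζ * G (s / m) ^ (m - 1)
  have hF (m : ℕ) :
      ∫ s in Ioo 0 (L m), s ^ ζ * G (s / m) ^ (m - 1) = ∫ s in Ioi 0, F m s := by
    rw [setIntegral_indicator measurableSet_Iio, Ioi_inter_Iio]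
  have hΓ : Gamma (ζ + 1) = ∫ s in Ioi 0, s ^ ζ * exp (-s) := by
    rw [Gamma_eq_integral (by linarith), add_sub_cancel_right]
    simp only [mul_comm]
  simp only [hF, hΓ]
  refine tendsto_integral_filter_of_dominated_convergence (fun s => s ^ ζ * exp (-(s / 4)))
    (Eventually.of_forall fun m => ?_) ?_ ?_ ?_
  · exact (Measurable.indicator (by fun_prop) measurableSet_Iio).aestronglyMeasurable
  · filter_upwards [eventually_ge_atTop 2, hLm.eventually_lt_const hδ] with m hm hLδ
    refine (ae_restrict_iff' measurableSet_Ioi).mpr (Eventually.of_forall fun s hs => ?_)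
    have hs0 : 0 ≤ s := le_of_lt hs
    by_cases hsL : s < L m
    · have hm0 : (0 : ℝ) < m := by positivity
      have hsm : s / m ∈ Ioo 0 δ :=
        ⟨div_pos hs hm0, (div_lt_div_of_pos_right hsL hm0).trans hLδ⟩
      simp only [F, indicator_of_mem (mem_Iio.mpr hsL), norm_mul, norm_pow, Real.norm_eq_abs,
        abs_of_nonneg (rpow_nonneg hs0 ζ)]
      gcongr
      exact (pow_le_pow_left₀ (abs_nonneg _) (hGδ _ hsm) _).trans
        (exp_neg_div_pow_sub_one_le hs0 hm)
    · simp only [F, indicator_of_notMem (mt mem_Iio.mp hsL), norm_zero]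
      positivity
  · show IntegrableOn (fun s : ℝ => s ^ ζ * exp (-(s / 4))) (Ioi 0)
    simpa [div_eq_inv_mul] using
      integrableOn_rpow_mul_exp_neg_mul_rpow (p := 1) (b := 4⁻¹) hζ one_pos (by norm_num)
  · refine (ae_restrict_iff' measurableSet_Ioi).mpr (Eventually.of_forall fun s hs => ?_)
    have hpow := tendsto_pow_sub_one_of_hasDerivAt hG0 hG s
    rw [neg_one_mul] at hpow
    refine (tendsto_const_nhds.mul hpow).congr' ?_
    filter_upwards [hL.eventually_gt_atTop s] with m hsL
    simp only [F, indicator_of_mem (mem_Iio.mpr hsL)]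

lemma hasDerivAt_one_sub_sub_mul_rpow (D : ℝ) {p : ℝ} (hp : 1 < p) :
    HasDerivAt (fun t : ℝ => 1 - t - D * t ^ p) (-1) 0 := by
  have hpow := hasDerivAt_rpow_const (x := 0) (Or.inr hp.le)
  rw [zero_rpow (sub_ne_zero.mpr hp.ne'), mul_zero] at hpow
  exact (((hasDerivAt_id (0 : ℝ)).const_sub 1).sub (hpow.const_mul D)).congr_deriv (by simp)

lemma tendsto_integral_Ioo_mul_log_Gamma {ζ c : ℝ} (hζ : 0 < ζ) (hc : 0 < c) (D : ℝ) :
    Tendsto (fun m : ℕ => ∫ s in Ioo 0 (c * log m),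
        s ^ ζ * (1 - s / m - D * (s / m) ^ (1 + ζ)) ^ (m - 1)) atTop (𝓝 (Gamma (ζ + 1))) :=
  tendsto_integral_rpow_mul_pow_Gamma (by linarith) (by fun_prop)
    (by simp [zero_rpow (by linarith : 1 + ζ ≠ 0)])
    (hasDerivAt_one_sub_sub_mul_rpow D (by linarith))
    ((tendsto_log_atTop.comp tendsto_natCast_atTop_atTop).const_mul_atTop hc)
    ((isLittleO_log_id_atTop.const_mul_left c).tendsto_div_nhds_zero.comp
      tendsto_natCast_atTop_atTop)

lemma strictAntiOn_const_mul_rpow_neg {α A : ℝ} (hα : 0 < α) (hA : 0 < A) :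
    StrictAntiOn (fun x : ℝ => A * x ^ (-α)) (Ioi 0) := fun _ hx _ _ hxy =>
  mul_lt_mul_of_pos_left (rpow_lt_rpow_of_neg hx hxy (neg_neg_of_pos hα)) hA

lemma image_const_mul_rpow_neg_Ioi {α A a : ℝ} (hα : 0 < α) (hA : 0 < A) (ha : 0 < a) :
    (fun x : ℝ => A * x ^ (-α)) '' Ioi a = Ioo 0 (A * a ^ (-α)) := by
  have hanti : StrictAntiOn (fun x : ℝ => A * x ^ (-α)) (Ioi 0) :=
    strictAntiOn_const_mul_rpow_neg hα hA
  ext t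
  constructor
  · rintro ⟨x, hx, rfl⟩
    exact ⟨by have := ha.trans hx; positivity, hanti ha (ha.trans hx) hx⟩
  · rintro ⟨ht, htA⟩
    have hx : 0 < (t / A) ^ (-α⁻¹) := by positivity
    have hfx : A * ((t / A) ^ (-α⁻¹)) ^ (-α) = t := by
      rw [← rpow_mul (by positivity), neg_mul_neg, inv_mul_cancel₀ hα.ne', rpow_one,
        mul_div_cancel₀ _ hA.ne']
    refine ⟨_, (hanti.lt_iff_gt hx ha).mp ?_, hfx⟩
    simpa [hfx] using htA

lemma integral_Ioo_eq_integral_Ioi_comp_rpow_neg {α A a : ℝ} (hα : 0 < α) (hA : 0 < A)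
    (ha : 0 < a) (g : ℝ → ℝ) :
    ∫ s in Ioo 0 (A * a ^ (-α)), g s =
      ∫ x in Ioi a, α * A * x ^ (-α - 1) * g (A * x ^ (-α)) := by
  rw [← image_const_mul_rpow_neg_Ioi hα hA ha,
    integral_image_eq_integral_abs_deriv_smul measurableSet_Ioi
      (fun x hx =>
        ((hasDerivAt_rpow_const (Or.inl (ha.trans hx).ne')).const_mul A).hasDerivWithinAt)
      ((strictAntiOn_const_mul_rpow_neg hα hA).injOn.mono fun x hx => ha.trans hx)]
  refine setIntegral_congr_fun measurableSet_Ioi fun x hx => ?_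
  have : 0 < x ^ (-α - 1) := rpow_pos_of_pos (ha.trans hx) _
  rw [smul_eq_mul, abs_mul, abs_mul, abs_neg, abs_of_pos hA, abs_of_pos hα, abs_of_pos this]
  ring

lemma integral_Ioi_rpow_mul_pow_eq {α β ζ C₁ C₂ M a : ℝ} (hα : 0 < α) (hβ : α * (1 + ζ) = β)
    (hC₁ : 0 < C₁) (hM : 0 < M) (ha : 0 < a) (n : ℕ) :
    ∫ x in Ioi a, x ^ (-β - 1) * (1 - C₁ * x ^ (-α) - C₂ * x ^ (-β)) ^ n =
      (α * (M * C₁) ^ (1 + ζ))⁻¹ * ∫ s in Ioo 0 (M * C₁ * a ^ (-α)),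
        s ^ ζ * (1 - s / M - C₂ / C₁ ^ (1 + ζ) * (s / M) ^ (1 + ζ)) ^ n := by
  have hA : 0 < M * C₁ := mul_pos hM hC₁
  rw [integral_Ioo_eq_integral_Ioi_comp_rpow_neg hα hA ha, ← integral_const_mul]
  refine setIntegral_congr_fun measurableSet_Ioi fun x hx => ?_
  have hx : 0 < x := ha.trans hx
  have hy : 0 < x ^ (-α) := rpow_pos_of_pos hx _
  have hscale : M * C₁ * x ^ (-α) / M = C₁ * x ^ (-α) := by field_simp
  have hβ_pow : C₂ / C₁ ^ (1 + ζ) * (C₁ * x ^ (-α)) ^ (1 + ζ) = C₂ * x ^ (-β) := by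
    rw [mul_rpow hC₁.le hy.le, ← rpow_mul hx.le, ← hβ, neg_mul]
    field_simp
  have hexp : x ^ (-α - 1) * (x ^ (-α)) ^ ζ = x ^ (-β - 1) := by
    rw [← rpow_mul hx.le, ← rpow_add hx, ← hβ]
    ring_nf
  have hA_pow : (M * C₁) ^ (1 + ζ) = M * C₁ * (M * C₁) ^ ζ := by
    rw [rpow_add hA, rpow_one]
  rw [hscale, hβ_pow, mul_rpow hA.le hy.le, ← hexp, hA_pow]
  field_simp

lemma natCast_mul_integral_Ioi_eq {α β ζ C₁ C₂ κ : ℝ} (hα : 0 < α) (hβ : α * (1 + ζ) = β)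
    (hC₁ : 0 < C₁) (hκ : 0 < κ) {m : ℕ} (hm : 1 < m) :
    m * ∫ x in Ioi (κ * (m : ℝ) ^ (1 / α) * log m ^ (-(1 / α))),
        x ^ (-β - 1) * (1 - C₁ * x ^ (-α) - C₂ * x ^ (-β)) ^ (m - 1) =
      (α * C₁ ^ (1 + ζ))⁻¹ * (m : ℝ) ^ (-ζ) * ∫ s in Ioo 0 (C₁ * κ ^ (-α) * log m),
        s ^ ζ * (1 - s / m - C₂ / C₁ ^ (1 + ζ) * (s / m) ^ (1 + ζ)) ^ (m - 1) := by
  have hm1 : (1 : ℝ) < m := by exact_mod_cast hm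
  have hm0 : (0 : ℝ) < m := by linarith
  have hlog : 0 < log m := log_pos hm1
  have hlimit : m * C₁ * (κ * (m : ℝ) ^ (1 / α) * log m ^ (-(1 / α))) ^ (-α) =
      C₁ * κ ^ (-α) * log m := by
    rw [mul_rpow (by positivity) (by positivity), mul_rpow hκ.le (by positivity),
      ← rpow_mul hm0.le, ← rpow_mul hlog.le, show 1 / α * -α = -1 by field_simp,
      show -(1 / α) * -α = 1 by field_simp, rpow_one, rpow_neg_one]
    field_simp
  rw [integral_Ioi_rpow_mul_pow_eq hα hβ hC₁ hm0 (by positivity), hlimit,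
    mul_rpow hm0.le hC₁.le, rpow_add hm0, rpow_one, rpow_neg hm0.le]
  field_simp

theorem main_bias_term_asymptotics_general
    (C₁ C₂ α β : ℝ) (hα : 0 < α) (hαβ : α < β) (hC₁ : 0 < C₁)
    (Ftilde : ℝ → ℝ)
    (hFt : ∀ x : ℝ, Ftilde x = 1 - C₁ * x ^ (-α) - C₂ * x ^ (-β))
    (ζ χ : ℝ) (hζ : ζ = (β - α) / α)
    (hχ : χ = C₂ * β * ζ * Real.Gamma (ζ + 1) / (C₁ ^ (ζ + 1) * (α + 1) * (β + 1)))
    (κ : ℝ) (hκ : 0 < κ)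
    (a : ℕ → ℝ)
    (ha : ∀ m : ℕ, a m = κ * (m : ℝ) ^ (1 / α) * (Real.log m) ^ (-(1 / α))) :
    (fun m : ℕ => C₂ * β * (m : ℝ) * (1 / (β + 1) - 1 / (α + 1)) *
        ∫ x in Set.Ioi (a m), x ^ (-β - 1) * (Ftilde x) ^ (m - 1))
      ~[atTop] fun m : ℕ => -χ * (m : ℝ) ^ (-ζ) := by
  have hζ0 : 0 < ζ := hζ ▸ div_pos (by linarith) hα
  have hβ : α * (1 + ζ) = β := by rw [hζ]; field_simp; ring
  set E := C₂ * β * (1 / (β + 1) - 1 / (α + 1)) * (α * C₁ ^ (1 + ζ))⁻¹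
  have hEΓ : E * Gamma (ζ + 1) = -χ := by
    have hα1 : α + 1 ≠ 0 := by linarith
    have hβ1 : β + 1 ≠ 0 := by linarith
    rw [hχ, add_comm ζ 1]
    simp only [E]
    field_simp
    rw [← hβ]
    ring
  have hJ := (isEquivalent_const_iff_tendsto (Gamma_pos_of_pos (by linarith)).ne').mpr
    (tendsto_integral_Ioo_mul_log_Gamma hζ0 (by positivity : 0 < C₁ * κ ^ (-α))
      (C₂ / C₁ ^ (1 + ζ)))
  refine (((IsEquivalent.refl (u := fun m : ℕ => E * (m : ℝ) ^ (-ζ))).mul hJ).congr_left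
    (EventuallyEq.symm ?_)).congr_right (Eventually.of_forall fun m => ?_)
  · filter_upwards [eventually_gt_atTop 1] with m hm
    have h := natCast_mul_integral_Ioi_eq hα hβ hC₁ hκ (C₂ := C₂) hm
    simp only [← hFt, ← ha] at h
    simp only [Pi.mul_apply, E]
    linear_combination C₂ * β * (1 / (β + 1) - 1 / (α + 1)) * h
  · show E * (m : ℝ) ^ (-ζ) * Gamma (ζ + 1) = -χ * (m : ℝ) ^ (-ζ)
    rw [← hEΓ]
    ring

/-- **Asymptotics of the main bias term.** With `F̃(x) = 1 - C₁x^(-α) - C₂x^(-β)`,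
`0 < α < β < ∞`, `C₁ > 0`, `ζ = (β-α)/α`, `a_m = κ m^(1/α)(ln m)^(-1/α)` and
`0 < κ < (C₁/ζ)^(1/α)`, the quantity
`K''_{m,2} = C₂ β m (1/(β+1) - 1/(α+1)) ∫_{a_m}^∞ x^(-β-1) F̃^(m-1)(x) dx`
satisfies `K''_{m,2} ∼ -χ m^(-ζ)` as `m → ∞`, where
`χ = C₂ β ζ Γ(ζ+1)/(C₁^(ζ+1)(α+1)(β+1))`. -/
theorem main_bias_term_asymptotics
    (C₁ C₂ α β : ℝ) (hα : 0 < α) (hαβ : α < β) (hC₁ : 0 < C₁)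
    (Ftilde : ℝ → ℝ)
    (hFt : ∀ x : ℝ, Ftilde x = 1 - C₁ * x ^ (-α) - C₂ * x ^ (-β))
    (ζ χ : ℝ) (hζ : ζ = (β - α) / α)
    (hχ : χ = C₂ * β * ζ * Real.Gamma (ζ + 1) / (C₁ ^ (ζ + 1) * (α + 1) * (β + 1)))
    (κ : ℝ) (hκ : 0 < κ) (hκ' : κ < (C₁ / ζ) ^ (1 / α))
    (a : ℕ → ℝ)
    (ha : ∀ m : ℕ, a m = κ * (m : ℝ) ^ (1 / α) * (Real.log m) ^ (-(1 / α))) :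
    (fun m : ℕ => C₂ * β * (m : ℝ) * (1 / (β + 1) - 1 / (α + 1)) *
        ∫ x in Set.Ioi (a m), x ^ (-β - 1) * (Ftilde x) ^ (m - 1))
      ~[atTop] fun m : ℕ => -χ * (m : ℝ) ^ (-ζ) :=
  main_bias_term_asymptotics_general C₁ C₂ α β hα hαβ hC₁ Ftilde hFt ζ χ hζ hχ κ hκ a ha
end

section
/- Let 0 < α < β < ∞, C₁ > 0, C₂ ∈ ℝ, set F̃(x) = 1 − C₁x^{−α} − C₂x^{−β}, ζ = (β−α)/α, and a_m = κ m^{1/α} (ln m)^{−1/α} with 0 < κ < (C₁/ζ)^{1/α}. Then ∫_{a_m}^∞ ( F̃^{m−1}(x) − exp(−C₁(m−1)x^{−α}) ) x^{−β−1} dx = o(m^{−β/α}) as m → ∞. -/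
open MeasureTheory Filter Set Asymptotics
open scoped Topology

/-!
For large `x` put `u = C₁ x^(-α)` and `v = C₂ x^(-β)`. Then `0 ≤ u ≤ 1` and `|v| ≤ u`, so
`F̃(x) = 1 - u - v` and `exp (-u)` both lie in `[-1, 1]` and differ by at most
`|v| + u² = O(x^(-δ))` with `δ = min β (2α) > α`. Their `(m-1)`-th powers therefore differ by `O(m x^(-δ))`, and the
integral over `(a_m, ∞)` is `O(m a_m^(-(δ+β))) = O(m^(1-(δ+β)/α) (log m)^((δ+β)/α))`, which is
`o(m^(-β/α))` because `δ > α`.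
-/

theorem abs_one_sub_sub_pow_sub_exp_neg_pow_le {u v : ℝ} (hu₀ : 0 ≤ u) (hu₁ : u ≤ 1)
    (hv : |v| ≤ u) (n : ℕ) :
    |(1 - u - v) ^ n - Real.exp (-u) ^ n| ≤ n * (|v| + u ^ 2) := by
  have h₁ : |1 - u - v| ≤ 1 := by rw [abs_le] at hv ⊢; constructor <;> linarith
  have h₂ : |Real.exp (-u)| ≤ 1 := by
    rw [abs_of_pos (Real.exp_pos _), Real.exp_le_one_iff]; linarith
  have h₃ : |Real.exp (-u) - 1 - -u| ≤ u ^ 2 := by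
    simpa using Real.abs_exp_sub_one_sub_id_le (x := -u)
      (by rw [abs_neg, abs_of_nonneg hu₀]; exact hu₁)
  calc |(1 - u - v) ^ n - Real.exp (-u) ^ n|
      ≤ |(1 - u - v) - Real.exp (-u)| * n * max |1 - u - v| |Real.exp (-u)| ^ (n - 1) :=
        abs_pow_sub_pow_le ..
    _ ≤ (|v| + u ^ 2) * n * 1 := by
        gcongr
        · calc |(1 - u - v) - Real.exp (-u)| = |-v - (Real.exp (-u) - 1 - -u)| := by ring_nf
            _ ≤ |v| + u ^ 2 := (abs_sub _ _).trans (by rw [abs_neg]; gcongr)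
        · exact pow_le_one₀ (le_max_of_le_left (abs_nonneg _)) (max_le h₁ h₂)
    _ = n * (|v| + u ^ 2) := by ring

theorem eventually_rpow_neg_bounds {α β C₁ : ℝ} (C₂ : ℝ) (hα : 0 < α) (hαβ : α < β) (hC₁ : 0 < C₁) :
    ∀ᶠ x : ℝ in atTop, C₁ * x ^ (-α) ≤ 1 ∧ |C₂| * x ^ (-β) ≤ C₁ * x ^ (-α) := by
  have h₁ : ∀ᶠ x : ℝ in atTop, C₁ * x ^ (-α) ≤ 1 :=
    (by simpa using (tendsto_rpow_neg_atTop hα).const_mul C₁ :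
      Tendsto (fun x : ℝ => C₁ * x ^ (-α)) atTop (𝓝 0)).eventually_le_const zero_lt_one
  have h₂ : ∀ᶠ x : ℝ in atTop, |C₂| * x ^ (-(β - α)) ≤ C₁ :=
    (by simpa using (tendsto_rpow_neg_atTop (sub_pos.2 hαβ)).const_mul |C₂| :
      Tendsto (fun x : ℝ => |C₂| * x ^ (-(β - α))) atTop (𝓝 0)).eventually_le_const hC₁
  filter_upwards [h₁, h₂, eventually_gt_atTop 0] with x hx₁ hx₂ hx
  refine ⟨hx₁, ?_⟩
  calc |C₂| * x ^ (-β) = |C₂| * x ^ (-(β - α)) * x ^ (-α) := by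
        rw [mul_assoc, ← Real.rpow_add hx]; ring_nf
    _ ≤ C₁ * x ^ (-α) := by gcongr

theorem eventually_abs_pow_sub_exp_le {α β C₁ : ℝ} (C₂ : ℝ) (hα : 0 < α) (hαβ : α < β)
    (hC₁ : 0 < C₁) :
    ∀ᶠ x : ℝ in atTop, ∀ n : ℕ,
      |(1 - C₁ * x ^ (-α) - C₂ * x ^ (-β)) ^ n - Real.exp (-C₁ * n * x ^ (-α))|
        ≤ n * (|C₂| + C₁ ^ 2) * x ^ (-min β (2 * α)) := by
  filter_upwards [eventually_rpow_neg_bounds C₂ hα hαβ hC₁, eventually_ge_atTop 1]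
    with x ⟨hu₁, hv⟩ hx n
  have hx₀ : 0 < x := zero_lt_one.trans_le hx
  have hv' : |C₂ * x ^ (-β)| ≤ C₁ * x ^ (-α) := by
    rwa [abs_mul, abs_of_nonneg (Real.rpow_nonneg hx₀.le _)]
  have hexp : Real.exp (-C₁ * n * x ^ (-α)) = Real.exp (-(C₁ * x ^ (-α))) ^ n := by
    rw [← Real.exp_nat_mul]; ring_nf
  have hsq : (C₁ * x ^ (-α)) ^ 2 = C₁ ^ 2 * x ^ (-(2 * α)) := by
    rw [mul_pow, ← Real.rpow_mul_natCast hx₀.le]; ring_nf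
  rw [hexp]
  refine (abs_one_sub_sub_pow_sub_exp_neg_pow_le (by positivity) hu₁ hv' n).trans ?_
  rw [hsq, abs_mul, abs_of_nonneg (Real.rpow_nonneg hx₀.le _), mul_assoc]
  gcongr
  calc |C₂| * x ^ (-β) + C₁ ^ 2 * x ^ (-(2 * α))
      ≤ |C₂| * x ^ (-min β (2 * α)) + C₁ ^ 2 * x ^ (-min β (2 * α)) := by
        gcongr <;> simp
    _ = (|C₂| + C₁ ^ 2) * x ^ (-min β (2 * α)) := by ring

theorem norm_integral_Ioi_mul_rpow_le {g : ℝ → ℝ} {c δ β K : ℝ} (hc : 0 < c)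
    (hδβ : 0 < δ + β) (hg : ∀ x ∈ Ioi c, |g x| ≤ K * x ^ (-δ)) :
    ‖∫ x in Ioi c, g x * x ^ (-β - 1)‖ ≤ K / (δ + β) * c ^ (-(δ + β)) := by
  have hs : -δ - β - 1 < -1 := by linarith
  have hbound : ∀ x ∈ Ioi c, ‖g x * x ^ (-β - 1)‖ ≤ K * x ^ (-δ - β - 1) := by
    intro x hx
    have hx₀ : 0 < x := hc.trans hx
    rw [norm_mul, Real.norm_eq_abs, Real.norm_of_nonneg (Real.rpow_nonneg hx₀.le _),
      show -δ - β - 1 = -δ + (-β - 1) by ring, Real.rpow_add hx₀, ← mul_assoc]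
    gcongr
    exact hg x hx
  refine (norm_integral_le_of_norm_le ((integrableOn_Ioi_rpow_of_lt hs hc).const_mul K)
    ((ae_restrict_iff' measurableSet_Ioi).2 (Eventually.of_forall hbound))).trans_eq ?_
  rw [integral_const_mul, integral_Ioi_rpow_of_lt hs hc,
    show -δ - β - 1 + 1 = -(δ + β) by ring, neg_div_neg_eq]
  ring

theorem tendsto_div_log_atTop : Tendsto (fun x : ℝ => x / Real.log x) atTop atTop := by
  have h : Tendsto (fun x : ℝ => Real.log x / x) atTop (𝓝[>] 0) :=
    tendsto_nhdsWithin_of_tendsto_nhds_of_eventually_within _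
      Real.isLittleO_log_id_atTop.tendsto_div_nhds_zero
      (by filter_upwards [eventually_gt_atTop 1] with x hx
          exact div_pos (Real.log_pos hx) (by linarith))
  exact h.inv_tendsto_nhdsGT_zero.congr fun x => by simp

theorem isLittleO_mul_rpow_div_log_rpow {α β γ κ : ℝ} (hα : 0 < α) (hκ : 0 ≤ κ) (hγ : α + β < γ) :
    (fun x : ℝ => x * (κ * (x / Real.log x) ^ (1 / α)) ^ (-γ))
      =o[atTop] fun x => x ^ (-(β / α)) := by
  have hs : 0 < (γ - β) / α - 1 := by rw [sub_pos, one_lt_div hα]; linarith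
  have key := ((isBigO_refl (fun x : ℝ => x ^ (1 - γ / α)) atTop).mul_isLittleO
    (isLittleO_log_rpow_rpow_atTop (γ / α) hs)).const_mul_left (κ ^ (-γ))
  refine key.congr' ?_ ?_
  · filter_upwards [eventually_gt_atTop 1] with x hx
    have hx₀ : 0 < x := zero_lt_one.trans hx
    have hlog : 0 < Real.log x := Real.log_pos hx
    rw [Real.mul_rpow hκ (by positivity), ← Real.rpow_mul (by positivity),
      Real.div_rpow hx₀.le hlog.le, Real.rpow_sub hx₀, Real.rpow_one,
      show 1 / α * -γ = -(γ / α) by ring, Real.rpow_neg hx₀.le, Real.rpow_neg hlog.le]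
    field_simp
  · filter_upwards [eventually_gt_atTop 0] with x hx
    rw [← Real.rpow_add hx]; ring_nf

theorem eventually_norm_integral_Ioi_pow_sub_exp_le {α β C₁ : ℝ} (C₂ : ℝ) (hα : 0 < α)
    (hαβ : α < β) (hC₁ : 0 < C₁) :
    ∀ᶠ c : ℝ in atTop, ∀ n : ℕ,
      ‖∫ x in Ioi c, ((1 - C₁ * x ^ (-α) - C₂ * x ^ (-β)) ^ n
          - Real.exp (-C₁ * n * x ^ (-α))) * x ^ (-β - 1)‖
        ≤ (|C₂| + C₁ ^ 2) / (min β (2 * α) + β) * (n * c ^ (-(min β (2 * α) + β))) := by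
  obtain ⟨X, hX⟩ := eventually_atTop.1 (eventually_abs_pow_sub_exp_le C₂ hα hαβ hC₁)
  filter_upwards [eventually_gt_atTop (max X 0)] with c hc n
  refine (norm_integral_Ioi_mul_rpow_le (δ := min β (2 * α)) (K := n * (|C₂| + C₁ ^ 2))
    ((le_max_right _ _).trans_lt hc)
    (by linarith [lt_min hαβ (by linarith : α < 2 * α)]) fun x hx => ?_).trans_eq (by ring)
  exact hX x ((le_max_left _ _).trans (hc.trans hx).le) n

theorem exp_approximation_negligible_general
    (C₁ C₂ α β : ℝ) (hα : 0 < α) (hαβ : α < β) (hC₁ : 0 < C₁)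
    (Ftilde : ℝ → ℝ)
    (hFt : ∀ x : ℝ, Ftilde x = 1 - C₁ * x ^ (-α) - C₂ * x ^ (-β))
    (κ : ℝ) (hκ : 0 < κ)
    (a : ℕ → ℝ)
    (ha : ∀ m : ℕ, a m = κ * (m : ℝ) ^ (1 / α) * (Real.log m) ^ (-(1 / α))) :
    (fun m : ℕ =>
        ∫ x in Set.Ioi (a m),
          ((Ftilde x) ^ (m - 1) - Real.exp (-C₁ * ((m : ℝ) - 1) * x ^ (-α))) *
            x ^ (-β - 1))
      =o[atTop] fun m : ℕ => (m : ℝ) ^ (-(β / α)) := by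
  set δ := min β (2 * α)
  have hαδ : α < δ := lt_min hαβ (by linarith)
  have ha' : a = fun m : ℕ => κ * ((m : ℝ) / Real.log m) ^ (1 / α) := funext fun m => by
    rw [ha, Real.div_rpow m.cast_nonneg (Real.log_natCast_nonneg m),
      Real.rpow_neg (Real.log_natCast_nonneg m), mul_assoc, ← div_eq_mul_inv]
  have ha_tendsto : Tendsto a atTop atTop := ha' ▸
    (((tendsto_rpow_atTop (by positivity)).comp tendsto_div_log_atTop).const_mul_atTop hκ).comp
      tendsto_natCast_atTop_atTop
  have hbound : ∀ᶠ m : ℕ in atTop, ‖∫ x in Ioi (a m),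
      ((Ftilde x) ^ (m - 1) - Real.exp (-C₁ * ((m : ℝ) - 1) * x ^ (-α))) * x ^ (-β - 1)‖
        ≤ (|C₂| + C₁ ^ 2) / (δ + β) * ‖(m : ℝ) * a m ^ (-(δ + β))‖ := by
    filter_upwards
      [ha_tendsto.eventually (eventually_norm_integral_Ioi_pow_sub_exp_le C₂ hα hαβ hC₁),
        ha_tendsto.eventually_gt_atTop 0, eventually_gt_atTop 0] with m hint ham hm
    simp_rw [hFt, ← Nat.cast_pred hm]
    refine (hint (m - 1)).trans ?_
    rw [Real.norm_of_nonneg (by positivity), Nat.cast_pred hm]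
    refine mul_le_mul_of_nonneg_left ?_ (div_nonneg (by positivity) (by linarith))
    gcongr
    linarith
  subst ha'
  exact (IsBigO.of_bound _ hbound).trans_isLittleO
    ((isLittleO_mul_rpow_div_log_rpow hα hκ.le (by linarith)).comp_tendsto
      tendsto_natCast_atTop_atTop)

/-- **Replacing `F̃^(m-1)` by the exponential is negligible.** With
`F̃(x) = 1 - C₁x^(-α) - C₂x^(-β)`, `0 < α < β < ∞`, `C₁ > 0`, `ζ = (β-α)/α`,
`a_m = κ m^(1/α)(ln m)^(-1/α)` and `0 < κ < (C₁/ζ)^(1/α)`, one has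
`∫_{a_m}^∞ (F̃^(m-1)(x) - exp(-C₁(m-1)x^(-α))) x^(-β-1) dx = o(m^(-β/α))` as `m → ∞`. -/
theorem exp_approximation_negligible
    (C₁ C₂ α β : ℝ) (hα : 0 < α) (hαβ : α < β) (hC₁ : 0 < C₁)
    (Ftilde : ℝ → ℝ)
    (hFt : ∀ x : ℝ, Ftilde x = 1 - C₁ * x ^ (-α) - C₂ * x ^ (-β))
    (ζ : ℝ) (hζ : ζ = (β - α) / α)
    (κ : ℝ) (hκ : 0 < κ) (hκ' : κ < (C₁ / ζ) ^ (1 / α))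
    (a : ℕ → ℝ)
    (ha : ∀ m : ℕ, a m = κ * (m : ℝ) ^ (1 / α) * (Real.log m) ^ (-(1 / α))) :
    (fun m : ℕ =>
        ∫ x in Set.Ioi (a m),
          ((Ftilde x) ^ (m - 1) - Real.exp (-C₁ * ((m : ℝ) - 1) * x ^ (-α))) *
            x ^ (-β - 1))
      =o[atTop] fun m : ℕ => (m : ℝ) ^ (-(β / α)) :=
  exp_approximation_negligible_general C₁ C₂ α β hα hαβ hC₁ Ftilde hFt κ hκ a ha
end

section
/- Let F be a distribution function satisfying the second-order condition 1 − F(x) = C₁x^{−α} + C₂x^{−β} + o(x^{−β}) as x → ∞ with 0 < α < β < ∞ and C₁ > 0, set ζ = (β−α)/α, and let a_m = κ m^{1/α} (ln m)^{−1/α} with 0 < κ < (C₁/ζ)^{1/α}. Then m ∫_{a_m}^∞ F^{m−1}(x) g(x) dx = o(m^{−ζ}) as m → ∞ for every function g with g(x) = o(x^{−β−1}) as x → ∞. -/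
open MeasureTheory Filter Set Asymptotics
open scoped Topology

lemma exp_neg_le_factorial_div (s : ℝ) (N : ℕ) (h : 0 < s) :
    Real.exp (-s) ≤ N.factorial / s ^ N := by
  have h1 : s ^ N / N.factorial ≤ Real.exp s := Real.pow_div_factorial_le_exp s h.le N
  have h2 : (0:ℝ) < s ^ N / N.factorial := by positivity
  rw [Real.exp_neg, ← inv_div]
  exact inv_anti₀ h2 h1

/-- **The remainder `R_{m,2}` is negligible.** Under the second-order condition with
`0 < α < β < ∞`, `C₁ > 0`, with `ζ = (β-α)/α`, `a_m = κ m^(1/α)(ln m)^(-1/α)`,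
`0 < κ < (C₁/ζ)^(1/α)`: for every measurable function `g` with `g(x) = o(x^(-β-1))` as
`x → ∞`, one has `m ∫_{a_m}^∞ F^(m-1)(x) g(x) dx = o(m^(-ζ))` as `m → ∞`. -/
theorem remainder_Rm2_negligible
    (F : ℝ → ℝ)
    (C₁ C₂ α β : ℝ) (hα : 0 < α) (hαβ : α < β) (hC₁ : 0 < C₁)
    (hso : SecondOrderCondition F C₁ C₂ α β)
    (ζ : ℝ) (hζ : ζ = (β - α) / α)
    (κ : ℝ) (hκ : 0 < κ) (hκ' : κ < (C₁ / ζ) ^ (1 / α))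
    (a : ℕ → ℝ)
    (ha : ∀ m : ℕ, a m = κ * (m : ℝ) ^ (1 / α) * (Real.log m) ^ (-(1 / α))) :
    ∀ g : ℝ → ℝ, Measurable g →
      (g =o[atTop] fun x : ℝ => x ^ (-β - 1)) →
      (fun m : ℕ => (m : ℝ) * ∫ x in Set.Ioi (a m), (F x) ^ (m - 1) * g x)
        =o[atTop] fun m : ℕ => (m : ℝ) ^ (-ζ) := by
  intro g _hgm hg
  have hβ : 0 < β := hα.trans hαβ
  have hα' : (α : ℝ) ≠ 0 := hα.ne'
  -- choose N with β + 1 ≤ N * α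
  obtain ⟨N, hN⟩ : ∃ N : ℕ, β + 1 ≤ (N : ℝ) * α := by
    refine ⟨⌈(β + 1) / α⌉₊, ?_⟩
    have h1 := Nat.le_ceil ((β + 1) / α)
    rw [div_le_iff₀ hα] at h1
    exact h1
  set c : ℝ := C₁ / 2 with hc_def
  have hc : 0 < c := by positivity
  set C0 : ℝ := N.factorial * (2 / c) ^ N with hC0_def
  have hC0 : 0 < C0 := by positivity
  set K : ℝ := C0 + 1 / β with hK_def
  have hKpos : 0 < K := by positivity
  -- the sequence a tends to infinity
  have haT : Tendsto (fun m : ℕ => a m) atTop atTop := by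
    have hlog2 : ∀ᶠ x : ℝ in atTop, Real.log x ≤ x ^ (1/2 : ℝ) := by
      have h := isLittleO_iff.mp (isLittleO_log_rpow_atTop (by norm_num : (0:ℝ) < 1/2))
        one_pos
      filter_upwards [h, eventually_ge_atTop (1:ℝ)] with x hx hx1
      have h0 : (0:ℝ) ≤ x := le_trans zero_le_one hx1
      calc Real.log x ≤ ‖Real.log x‖ := le_abs_self _
        _ ≤ 1 * ‖x ^ (1/2 : ℝ)‖ := hx
        _ = x ^ (1/2 : ℝ) := by
            rw [one_mul, Real.norm_eq_abs, abs_of_nonneg (Real.rpow_nonneg h0 _)]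
    have hEv : ∀ᶠ m : ℕ in atTop,
        κ * (m : ℝ) ^ (1/(2*α) : ℝ) ≤ a m := by
      filter_upwards [tendsto_natCast_atTop_atTop.eventually hlog2,
        (Real.tendsto_log_atTop.comp tendsto_natCast_atTop_atTop).eventually_ge_atTop 1,
        eventually_ge_atTop 1] with m hlm hl1 hm1
      have hm0 : (0:ℝ) < m := by exact_mod_cast Nat.lt_of_lt_of_le Nat.zero_lt_one hm1
      have hlpos : 0 < Real.log m := lt_of_lt_of_le one_pos hl1
      have h1 : ((m:ℝ) ^ (1/2 : ℝ)) ^ (-(1/α) : ℝ) ≤ (Real.log m) ^ (-(1/α) : ℝ) := by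
        rw [Real.rpow_neg (Real.rpow_nonneg hm0.le _), Real.rpow_neg hlpos.le]
        exact inv_anti₀ (Real.rpow_pos_of_pos hlpos _)
          (Real.rpow_le_rpow hlpos.le hlm (by positivity))
      have h2 : ((m:ℝ) ^ (1/2 : ℝ)) ^ (-(1/α) : ℝ) = (m:ℝ) ^ ((1/2) * (-(1/α)) : ℝ) :=
        (Real.rpow_mul hm0.le _ _).symm
      rw [ha m]
      calc κ * (m : ℝ) ^ (1/(2*α) : ℝ)
          = κ * (m:ℝ) ^ (1/α : ℝ) * (m:ℝ) ^ ((1/2) * (-(1/α)) : ℝ) := by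
            rw [mul_assoc, ← Real.rpow_add hm0]
            congr 1
            field_simp
            ring
        _ ≤ κ * (m:ℝ) ^ (1/α : ℝ) * (Real.log m) ^ (-(1/α) : ℝ) := by
            refine mul_le_mul_of_nonneg_left ?_ (by positivity)
            rw [← h2]; exact h1
    refine tendsto_atTop_mono' atTop hEv ?_
    exact ((tendsto_rpow_atTop (by positivity)).comp tendsto_natCast_atTop_atTop).const_mul_atTop hκ
  -- enter the littleO goal
  rw [isLittleO_iff]
  intro ε hε
  set δ : ℝ := ε / K with hδ_def
  have hδ : 0 < δ := by positivity
  -- eventual bounds in x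
  have hgb := isLittleO_iff.mp hg hδ
  have hFb := isLittleO_iff.mp hso one_pos
  have hx2 : ∀ᶠ x : ℝ in atTop, x ^ (α - β) ≤ C₁ / (2 * (|C₂| + 1)) := by
    have h := tendsto_rpow_neg_atTop (show (0:ℝ) < β - α by linarith)
    have h' : Tendsto (fun x : ℝ => x ^ (α - β)) atTop (𝓝 0) := by
      simpa [neg_sub] using h
    exact h'.eventually (eventually_le_nhds (by positivity))
  have hx3 : ∀ᶠ x : ℝ in atTop, x ^ (-α) ≤ 1 / (2 * C₁ + 1) := by
    exact (tendsto_rpow_neg_atTop hα).eventually (eventually_le_nhds (by positivity))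
  obtain ⟨X, hX⟩ := eventually_atTop.mp
    ((eventually_ge_atTop (1:ℝ)).and (hgb.and (hFb.and (hx2.and hx3))))
  -- pointwise consequences for x ≥ X
  have key : ∀ x : ℝ, X ≤ x → ‖g x‖ ≤ δ * x ^ (-β - 1) ∧
      |F x| ≤ 1 - c * x ^ (-α) ∧ c * x ^ (-α) ≤ 1 := by
    intro x hx
    obtain ⟨hx1, hg1, hF1, h2x, h3x⟩ := hX x hx
    have hx0 : (0:ℝ) < x := lt_of_lt_of_le one_pos hx1
    set u : ℝ := x ^ (-α) with hu_def
    set v : ℝ := x ^ (-β) with hv_def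
    have hu0 : 0 < u := Real.rpow_pos_of_pos hx0 _
    have hv0 : 0 < v := Real.rpow_pos_of_pos hx0 _
    have hg1' : ‖g x‖ ≤ δ * x ^ (-β - 1) := by
      calc ‖g x‖ ≤ δ * ‖x ^ (-β - 1)‖ := hg1
        _ = δ * x ^ (-β - 1) := by
            rw [Real.norm_eq_abs, abs_of_nonneg (Real.rpow_nonneg hx0.le _)]
    have hF1' : |1 - F x - (C₁ * u + C₂ * v)| ≤ v := by
      have : ‖1 - F x - (C₁ * u + C₂ * v)‖ ≤ 1 * ‖v‖ := hF1
      rwa [Real.norm_eq_abs, Real.norm_eq_abs, one_mul, abs_of_nonneg hv0.le] at this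
    have hvu : v ≤ (C₁ / (2 * (|C₂| + 1))) * u := by
      have hv_eq : v = x ^ (α - β) * u := by
        rw [hv_def, hu_def, ← Real.rpow_add hx0]
        congr 1; ring
      rw [hv_eq]
      exact mul_le_mul_of_nonneg_right h2x hu0.le
    have hC2pos : (0:ℝ) < |C₂| + 1 := by positivity
    have hCv : (|C₂| + 1) * v ≤ (C₁ / 2) * u := by
      have h := mul_le_mul_of_nonneg_left hvu hC2pos.le
      calc (|C₂| + 1) * v ≤ (|C₂| + 1) * ((C₁ / (2 * (|C₂| + 1))) * u) := h
        _ = (C₁ / 2) * u := by field_simp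
    have hC2v₁ : -(|C₂| * v) ≤ C₂ * v := by
      have := neg_abs_le (C₂ * v)
      rwa [abs_mul, abs_of_nonneg hv0.le] at this
    have hC2v₂ : C₂ * v ≤ |C₂| * v := by
      have := le_abs_self (C₂ * v)
      rwa [abs_mul, abs_of_nonneg hv0.le] at this
    obtain ⟨hlo, hhi⟩ := abs_le.mp hF1'
    -- upper bound on F x
    have hFup : F x ≤ 1 - c * u := by
      rw [hc_def]; linarith [hlo, hC2v₁, hCv]
    -- lower bound on F x
    have h3x' : (2 * C₁ + 1) * u ≤ 1 := by
      have h := mul_le_mul_of_nonneg_left h3x (show (0:ℝ) ≤ 2*C₁+1 by positivity)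
      calc (2 * C₁ + 1) * u ≤ (2 * C₁ + 1) * (1 / (2 * C₁ + 1)) := h
        _ = 1 := by field_simp
    have hextra : (0:ℝ) ≤ (C₁ / 2 + 1) * u := by positivity
    have hextra2 : (0:ℝ) ≤ (3 * C₁ / 2 + 1) * u := by positivity
    have hFlow : 0 ≤ F x := by linarith [hhi, hC2v₂, hCv, h3x', hextra]
    have hcu1 : c * u ≤ 1 := by rw [hc_def]; linarith [h3x', hextra2]
    exact ⟨hg1', abs_le.mpr ⟨by linarith [hFlow, hcu1], hFup⟩, hcu1⟩
  -- eventual facts in m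
  have hmEv1 : ∀ᶠ m : ℕ in atTop, X ≤ a m := haT.eventually_ge_atTop X
  have hmEv2 : ∀ᶠ m : ℕ in atTop, κ ^ (α : ℝ) ≤ Real.log m ∧ 1 ≤ Real.log m := by
    have h := Real.tendsto_log_atTop.comp tendsto_natCast_atTop_atTop
    exact (h.eventually_ge_atTop _).and (h.eventually_ge_atTop 1)
  filter_upwards [hmEv1, hmEv2, eventually_ge_atTop 2] with m hXa hlogm hm2
  obtain ⟨hκlog, hlog1⟩ := hlogm
  have hm0 : (0:ℝ) < m := by
    have : (2:ℝ) ≤ m := by exact_mod_cast hm2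
    linarith
  have hlogpos : 0 < Real.log m := lt_of_lt_of_le one_pos hlog1
  have ha0 : 0 < a m := by
    rw [ha m]
    exact mul_pos (mul_pos hκ (Real.rpow_pos_of_pos hm0 _)) (Real.rpow_pos_of_pos hlogpos _)
  set b : ℝ := (m:ℝ) ^ (1/α : ℝ) with hb_def
  have hb0 : 0 < b := Real.rpow_pos_of_pos hm0 _
  have hab : a m ≤ b := by
    have hκle : κ ≤ (Real.log m) ^ (1/α : ℝ) := by
      have h := Real.rpow_le_rpow (by positivity) hκlog (by positivity : (0:ℝ) ≤ 1/α)
      rwa [← Real.rpow_mul hκ.le, mul_one_div_cancel hα', Real.rpow_one] at h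
    have hL : 0 < (Real.log m) ^ (1/α : ℝ) := Real.rpow_pos_of_pos hlogpos _
    have e1 : a m = (κ / (Real.log m) ^ (1/α : ℝ)) * b := by
      rw [ha m, Real.rpow_neg hlogpos.le, hb_def]; ring
    have e2 : κ / (Real.log m) ^ (1/α : ℝ) ≤ 1 := (div_le_one hL).mpr hκle
    calc a m = (κ / (Real.log m) ^ (1/α : ℝ)) * b := e1
      _ ≤ 1 * b := mul_le_mul_of_nonneg_right e2 hb0.le
      _ = b := one_mul b
  set q : ℝ := (N:ℝ) * α - β - 1 with hq_def
  have hq0 : 0 ≤ q := by rw [hq_def]; linarith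
  set D : ℝ := δ * C0 * (m:ℝ) ^ (-(N:ℝ)) with hD_def
  have hD0 : 0 < D :=
    mul_pos (mul_pos hδ hC0) (Real.rpow_pos_of_pos hm0 _)
  set G : ℝ → ℝ := fun x => min (δ * x ^ (-β - 1)) (D * x ^ q) with hG_def
  have hGmeas : Measurable G := by fun_prop
  have hIntTail : IntegrableOn (fun x : ℝ => δ * x ^ (-β - 1)) (Ioi (a m)) :=
    (integrableOn_Ioi_rpow_of_lt (by linarith) ha0).const_mul δ
  have hGnonneg : ∀ x : ℝ, 0 < x → 0 ≤ G x := fun x hx =>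
    le_min (mul_nonneg hδ.le (Real.rpow_nonneg hx.le _))
      (mul_nonneg hD0.le (Real.rpow_nonneg hx.le _))
  have hGint : IntegrableOn G (Ioi (a m)) := by
    refine hIntTail.mono' hGmeas.aestronglyMeasurable.restrict ?_
    refine (ae_restrict_iff' measurableSet_Ioi).mpr (ae_of_all _ fun x hx => ?_)
    have hx0 : 0 < x := ha0.trans hx
    rw [Real.norm_eq_abs, abs_of_nonneg (hGnonneg x hx0)]
    exact min_le_left _ _
  -- pointwise bound
  have hpt : ∀ x ∈ Ioi (a m), ‖F x ^ (m-1) * g x‖ ≤ G x := by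
    intro x hx
    have hx0 : 0 < x := ha0.trans hx
    have hXx : X ≤ x := le_trans hXa (le_of_lt hx)
    obtain ⟨hgx, hFx, hcu⟩ := key x hXx
    have hu0 : 0 < x ^ (-α : ℝ) := Real.rpow_pos_of_pos hx0 _
    have hcu0 : (0:ℝ) ≤ c * x ^ (-α : ℝ) := by positivity
    have hnorm : ‖F x ^ (m-1) * g x‖ = |F x| ^ (m-1) * ‖g x‖ := by
      rw [norm_mul, norm_pow, Real.norm_eq_abs]
    rw [hnorm]
    refine le_min ?_ ?_
    · calc |F x| ^ (m-1) * ‖g x‖ ≤ 1 * (δ * x ^ (-β-1)) := by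
            refine mul_le_mul ?_ hgx (norm_nonneg _) zero_le_one
            exact pow_le_one₀ (abs_nonneg _) (by linarith)
        _ = δ * x ^ (-β-1) := one_mul _
    · set s : ℝ := (c/2) * (m:ℝ) * x ^ (-α : ℝ) with hs_def
      have hs0 : 0 < s := mul_pos (mul_pos (by positivity) hm0) hu0
      have hFpow : |F x| ^ (m-1) ≤ C0 * (m:ℝ)^(-(N:ℝ)) * x ^ ((N:ℝ)*α) := by
        have h1 : |F x| ^ (m-1) ≤ (1 - c * x^(-α : ℝ)) ^ (m-1) :=
          pow_le_pow_left₀ (abs_nonneg _) hFx _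
        have h2 : (1 - c * x^(-α : ℝ)) ^ (m-1) ≤ Real.exp (-(c * x^(-α : ℝ))) ^ (m-1) := by
          refine pow_le_pow_left₀ (by linarith) ?_ _
          linarith [Real.add_one_le_exp (-(c * x^(-α : ℝ)))]
        have h3 : Real.exp (-(c * x^(-α : ℝ))) ^ (m-1)
            = Real.exp (((m-1:ℕ):ℝ) * (-(c * x^(-α : ℝ)))) :=
          (Real.exp_nat_mul _ _).symm
        have hm1cast : ((m-1:ℕ):ℝ) = (m:ℝ) - 1 := by
          have h1m : (1:ℕ) ≤ m := by omega
          rw [Nat.cast_sub h1m, Nat.cast_one]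
        have hm2' : (2:ℝ) ≤ m := by exact_mod_cast hm2
        have h4 : Real.exp (((m-1:ℕ):ℝ) * (-(c * x^(-α : ℝ)))) ≤ Real.exp (-s) := by
          rw [Real.exp_le_exp, hm1cast, hs_def]
          linarith [mul_nonneg hcu0 (by linarith : (0:ℝ) ≤ (m:ℝ)/2 - 1)]
        have h5 : Real.exp (-s) ≤ N.factorial / s ^ N := exp_neg_le_factorial_div s N hs0
        have em : (m:ℝ)^(-(N:ℝ)) * (m:ℝ)^(N:ℕ) = 1 := by
          rw [← Real.rpow_natCast (m:ℝ) N, ← Real.rpow_add hm0, neg_add_cancel,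
            Real.rpow_zero]
        have ex : x^((N:ℝ)*α) * (x^(-α : ℝ))^(N:ℕ) = 1 := by
          rw [← Real.rpow_natCast (x^(-α : ℝ)) N, ← Real.rpow_mul hx0.le,
            ← Real.rpow_add hx0, show (N:ℝ)*α + -α*(N:ℝ) = 0 by ring, Real.rpow_zero]
        have ec : (2/c)^N * (c/2)^N = 1 := by
          rw [← mul_pow, show (2/c)*(c/2) = 1 by field_simp, one_pow]
        have h6 : (N.factorial : ℝ) / s ^ N = C0 * (m:ℝ)^(-(N:ℝ)) * x ^ ((N:ℝ)*α) := by
          rw [div_eq_iff (pow_pos hs0 N).ne']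
          rw [hs_def, mul_pow, mul_pow]
          calc (N.factorial : ℝ)
              = (N.factorial : ℝ) * ((2/c)^N * (c/2)^N) * ((m:ℝ)^(-(N:ℝ)) * (m:ℝ)^(N:ℕ))
                * (x^((N:ℝ)*α) * (x^(-α : ℝ))^(N:ℕ)) := by
                rw [em, ex, ec]; ring
            _ = C0 * (m:ℝ)^(-(N:ℝ)) * x ^ ((N:ℝ)*α) * ((c/2)^N * (m:ℝ)^(N:ℕ)
                * (x^(-α : ℝ))^(N:ℕ)) := by
                rw [hC0_def]; ring
        calc |F x| ^ (m-1) ≤ (1 - c * x^(-α : ℝ)) ^ (m-1) := h1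
          _ ≤ Real.exp (-(c * x^(-α : ℝ))) ^ (m-1) := h2
          _ = Real.exp (((m-1:ℕ):ℝ) * (-(c * x^(-α : ℝ)))) := h3
          _ ≤ Real.exp (-s) := h4
          _ ≤ N.factorial / s ^ N := h5
          _ = C0 * (m:ℝ)^(-(N:ℝ)) * x ^ ((N:ℝ)*α) := h6
      calc |F x| ^ (m-1) * ‖g x‖
          ≤ (C0 * (m:ℝ)^(-(N:ℝ)) * x^((N:ℝ)*α)) * (δ * x^(-β-1)) :=
            mul_le_mul hFpow hgx (norm_nonneg _) (by positivity)
        _ = D * x ^ q := by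
            rw [hD_def, hq_def, show ((N:ℝ)*α - β - 1) = (N:ℝ)*α + (-β-1) by ring,
              Real.rpow_add hx0]
            ring
  -- split the integral
  have hIocInt : IntegrableOn G (Ioc (a m) b) := hGint.mono_set Ioc_subset_Ioi_self
  have hIoiInt : IntegrableOn G (Ioi b) := hGint.mono_set (Ioi_subset_Ioi hab)
  have hsplit : ∫ x in Ioi (a m), G x = (∫ x in Ioc (a m) b, G x) + ∫ x in Ioi b, G x := by
    rw [← Ioc_union_Ioi_eq_Ioi hab,
      setIntegral_union Ioc_disjoint_Ioi_same measurableSet_Ioi hIocInt hIoiInt]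
  have hpiece1 : ∫ x in Ioc (a m) b, G x ≤ δ * C0 * (m:ℝ) ^ (-(β/α) : ℝ) := by
    have hmono : ∫ x in Ioc (a m) b, G x ≤ ∫ x in Ioc (a m) b, D * b ^ q := by
      refine setIntegral_mono_on hIocInt
        (integrableOn_const measure_Ioc_lt_top.ne) measurableSet_Ioc ?_
      intro x hx
      have hx0 : 0 < x := ha0.trans hx.1
      refine le_trans (min_le_right _ _) ?_
      exact mul_le_mul_of_nonneg_left (Real.rpow_le_rpow hx0.le hx.2 hq0) hD0.le
    have hconst : ∫ x in Ioc (a m) b, (D * b ^ q) = (b - a m) * (D * b ^ q) := by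
      rw [setIntegral_const, Real.volume_real_Ioc_of_le (by linarith),
        smul_eq_mul]
    have hbval : b ^ (q + 1 : ℝ) = (m:ℝ) ^ ((N:ℝ) - β/α) := by
      rw [hb_def, ← Real.rpow_mul hm0.le]
      congr 1
      rw [hq_def]; field_simp; ring
    calc ∫ x in Ioc (a m) b, G x ≤ ∫ x in Ioc (a m) b, (D * b ^ q) := hmono
      _ = (b - a m) * (D * b ^ q) := hconst
      _ ≤ b * (D * b ^ q) := mul_le_mul_of_nonneg_right (by linarith) (by positivity)
      _ = D * b ^ (q + 1 : ℝ) := by rw [Real.rpow_add hb0, Real.rpow_one]; ring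
      _ = D * (m:ℝ) ^ ((N:ℝ) - β/α) := by rw [hbval]
      _ = δ * C0 * ((m:ℝ)^(-(N:ℝ)) * (m:ℝ)^((N:ℝ) - β/α)) := by rw [hD_def]; ring
      _ = δ * C0 * (m:ℝ) ^ (-(β/α) : ℝ) := by
          rw [← Real.rpow_add hm0, show -(N:ℝ) + ((N:ℝ) - β/α) = -(β/α) by ring]
  have hpiece2 : ∫ x in Ioi b, G x ≤ δ * ((m:ℝ)^(-(β/α):ℝ) / β) := by
    have hintb : IntegrableOn (fun x : ℝ => δ * x ^ (-β-1)) (Ioi b) :=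
      (integrableOn_Ioi_rpow_of_lt (by linarith) hb0).const_mul δ
    have hmono : ∫ x in Ioi b, G x ≤ ∫ x in Ioi b, δ * x^(-β-1) :=
      setIntegral_mono_on hIoiInt hintb measurableSet_Ioi (fun x _ => min_le_left _ _)
    have hbeta : b ^ (-β:ℝ) = (m:ℝ) ^ (-(β/α):ℝ) := by
      rw [hb_def, ← Real.rpow_mul hm0.le]
      congr 1
      field_simp
    calc ∫ x in Ioi b, G x ≤ ∫ x in Ioi b, δ * x^(-β-1) := hmono
      _ = δ * ∫ x in Ioi b, x^(-β-1) := by rw [MeasureTheory.integral_const_mul]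
      _ = δ * (-b ^ (-β-1+1 : ℝ) / (-β-1+1)) := by
          rw [integral_Ioi_rpow_of_lt (by linarith) hb0]
      _ = δ * (b ^ (-β : ℝ) / β) := by rw [show (-β-1+1 : ℝ) = -β by ring]; ring
      _ = δ * ((m:ℝ)^(-(β/α):ℝ) / β) := by rw [hbeta]
  have hnormint : ‖∫ x in Ioi (a m), F x ^ (m-1) * g x‖ ≤ ∫ x in Ioi (a m), G x :=
    norm_integral_le_of_norm_le hGint
      ((ae_restrict_iff' measurableSet_Ioi).mpr (ae_of_all _ hpt))
  have hGtotal : ∫ x in Ioi (a m), G x ≤ δ * K * (m:ℝ)^(-(β/α):ℝ) := by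
    rw [hsplit]
    refine le_trans (add_le_add hpiece1 hpiece2) (le_of_eq ?_)
    rw [hK_def]
    field_simp
  have hζm : (m:ℝ) * ((m:ℝ)^(-(β/α):ℝ)) = (m:ℝ)^(-ζ:ℝ) := by
    nth_rewrite 1 [← Real.rpow_one (m:ℝ)]
    rw [← Real.rpow_add hm0]
    congr 1
    rw [hζ]
    field_simp
    ring
  calc ‖(m:ℝ) * ∫ x in Ioi (a m), F x ^ (m-1) * g x‖
      = (m:ℝ) * ‖∫ x in Ioi (a m), F x ^ (m-1) * g x‖ := by
        rw [norm_mul, Real.norm_eq_abs, abs_of_nonneg hm0.le]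
    _ ≤ (m:ℝ) * (δ * K * (m:ℝ)^(-(β/α):ℝ)) :=
        mul_le_mul_of_nonneg_left (le_trans hnormint hGtotal) hm0.le
    _ = δ * K * ((m:ℝ) * (m:ℝ)^(-(β/α):ℝ)) := by ring
    _ = ε * (m:ℝ)^(-ζ:ℝ) := by
        rw [hζm, hδ_def]
        field_simp
    _ ≤ ε * ‖(m:ℝ)^(-ζ:ℝ)‖ := by
        rw [Real.norm_eq_abs, abs_of_nonneg (Real.rpow_nonneg hm0.le _)]
end

section
/- For all real α, β with 0 < α < β, setting ζ = (β−α)/α, the quantity RMMSE(1) = ( η(α,β) Γ²(2+ζ) )^{1/(1+2ζ)} is strictly greater than 1, where η(α,β) = ( β(α+1) / (α(β+1)) )² · ( (α+1)² / (α(α+2)) )^{2ζ} and Γ is Euler's gamma function; equivalently, η(α,β) Γ²(2+ζ) > 1 for all 0 < α < β. -/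
/-!
Every factor of `η(α,β) Γ²(2+ζ)` exceeds `1`: `β(α+1)/(α(β+1)) > 1` because `x ↦ x/(x+1)` is
increasing, `(α+1)² = α(α+2) + 1`, the exponent `2ζ` is positive, and `Γ` is strictly increasing
on `[2, ∞)` with `Γ(2) = 1`. A number above `1` stays above `1` under the positive power
`1/(1+2ζ)`.
-/

open Filter Set
open scoped Topology

lemma one_lt_mul_add_one_div_mul_add_one {a b : ℝ} (ha : 0 < a) (hab : a < b) :
    1 < b * (a + 1) / (a * (b + 1)) := by
  rw [one_lt_div (mul_pos ha (by linarith))]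
  linarith

lemma one_lt_add_one_sq_div_mul_add_two {a : ℝ} (ha : 0 < a) :
    1 < (a + 1) ^ 2 / (a * (a + 2)) := by
  rw [one_lt_div (by positivity)]
  nlinarith

lemma Real.one_lt_Gamma_of_two_lt {x : ℝ} (hx : 2 < x) : 1 < Real.Gamma x :=
  Real.Gamma_two ▸ Real.Gamma_strictMonoOn_Ici (by simp) (mem_Ici.mpr hx.le) hx

/-- **The Hill estimator dominates the DPR estimator.** For all `0 < α < β`, with
`ζ = (β-α)/α` and `η(α,β) = (β(α+1)/(α(β+1)))² ((α+1)²/(α(α+2)))^(2ζ)`, the ratio of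
minimal mean square errors `RMMSE(1) = (η(α,β) Γ²(2+ζ))^(1/(1+2ζ))` is strictly greater
than `1`; equivalently, `η(α,β) Γ²(2+ζ) > 1`. -/
theorem rmmse_hill_gt_one
    (α β : ℝ) (hα : 0 < α) (hαβ : α < β)
    (ζ η : ℝ) (hζ : ζ = (β - α) / α)
    (hη : η = (β * (α + 1) / (α * (β + 1))) ^ 2 *
      ((α + 1) ^ 2 / (α * (α + 2))) ^ (2 * ζ)) :
    1 < (η * (Real.Gamma (2 + ζ)) ^ 2) ^ (1 / (1 + 2 * ζ)) ∧
      1 < η * (Real.Gamma (2 + ζ)) ^ 2 := by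
  have hζ_pos : 0 < ζ := hζ ▸ div_pos (sub_pos.mpr hαβ) hα
  have hη_gt : 1 < η := hη ▸ one_lt_mul_of_lt_of_le
    (one_lt_pow₀ (one_lt_mul_add_one_div_mul_add_one hα hαβ) two_ne_zero)
    (Real.one_lt_rpow (one_lt_add_one_sq_div_mul_add_two hα) (by linarith)).le
  have hΓ_gt : 1 < Real.Gamma (2 + ζ) := Real.one_lt_Gamma_of_two_lt (by linarith)
  have hprod : 1 < η * Real.Gamma (2 + ζ) ^ 2 :=
    one_lt_mul_of_lt_of_le hη_gt (one_lt_pow₀ hΓ_gt two_ne_zero).le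
  exact ⟨Real.one_lt_rpow hprod (one_div_pos.mpr (by linarith)), hprod⟩
end
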